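/- arXiv:1601.03817 — 7 statements merged into one kernel-verified Lean document; each statement's English description precedes it below -/
import Mathlib

section
/- If x ∈ ℝ² is an edge point whose unique tie is {i,j}, then code(x)_i = code(x)_j = z + 1/2 for some integer z with 0 ≤ z ≤ n−2, and the restriction of code(x) to {1,…,n}∖{i,j} is a bijection onto {0,1,…,n−1} ∖ {z, z+1}. -/
/-!
Let `r k` be the number of generators strictly farther from `x` than `p k`. Off the tie the
code is `r`, on the tie it is `r + 1/2`. Since `r` strictly decreases as the distance grows, it
is injective wherever the distances are distinct. With `z = r i = r j`, an index farther than
the tie has `r < z`, while a closer one counts `i`, `j` and everything beyond them, so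
`r ≥ z + 2`. Hence the `n - 2` remaining indices go injectively into the `n - 2` values
`{0, …, n - 1} ∖ {z, z + 1}`.
-/

noncomputable section

open Metric

abbrev Pt : Type := EuclideanSpace ℝ (Fin 2)

/-- The chromatic code of a point `x` with respect to generators `p`:
`code p x i` = #{j ≠ i : dist(x,p j) > dist(x,p i)} + (1/2)·#{j ≠ i : dist(x,p j) = dist(x,p i)}. -/
def code {n : ℕ} (p : Fin n → Pt) (x : Pt) (i : Fin n) : ℚ :=
  (Set.ncard {j : Fin n | j ≠ i ∧ dist x (p i) < dist x (p j)} : ℚ)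
  + (1/2) * (Set.ncard {j : Fin n | j ≠ i ∧ dist x (p j) = dist x (p i)} : ℚ)

/-- `{i,j}` is a tie of `x`. -/
def Tie {n : ℕ} (p : Fin n → Pt) (x : Pt) (i j : Fin n) : Prop :=
  i ≠ j ∧ dist x (p i) = dist x (p j)

/-- A cell point has no ties. -/
def CellPoint {n : ℕ} (p : Fin n → Pt) (x : Pt) : Prop :=
  ∀ i j, ¬ Tie p x i j

/-- An edge point has exactly one (unordered) tie. -/
def EdgePoint {n : ℕ} (p : Fin n → Pt) (x : Pt) : Prop :=
  ∃ i j, Tie p x i j ∧ ∀ u v, Tie p x u v → ({u, v} : Set (Fin n)) = {i, j}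

/-- A 2-I vertex point has exactly two ties, forming two disjoint pairs. -/
def Vertex2I {n : ℕ} (p : Fin n → Pt) (x : Pt) : Prop :=
  ∃ i j u v : Fin n, i ≠ j ∧ i ≠ u ∧ i ≠ v ∧ j ≠ u ∧ j ≠ v ∧ u ≠ v ∧
    Tie p x i j ∧ Tie p x u v ∧
    ∀ a b, Tie p x a b → ({a, b} : Set (Fin n)) = {i, j} ∨ ({a, b} : Set (Fin n)) = {u, v}

/-- A 3-I vertex point: its ties are exactly the three pairs contained in some
3-element subset `{i,j,k}`. -/
def Vertex3I {n : ℕ} (p : Fin n → Pt) (x : Pt) : Prop :=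
  ∃ i j k : Fin n, i ≠ j ∧ i ≠ k ∧ j ≠ k ∧
    ∀ a b, Tie p x a b ↔
      (a ≠ b ∧ a ∈ ({i, j, k} : Set (Fin n)) ∧ b ∈ ({i, j, k} : Set (Fin n)))

/-- The chromatic distance between two points. -/
def chromDist {n : ℕ} (p : Fin n → Pt) (x y : Pt) : ℚ :=
  ∑ i, |code p x i - code p y i|

/-- The spatial particle of `x`: the fiber of the chromatic code through `x`. -/
def particle {n : ℕ} (p : Fin n → Pt) (x : Pt) : Set Pt :=
  {y | code p y = code p x}

/-- The generators are in general position: every point of the plane is one of the four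
particle types, and perpendicular bisectors of distinct pairs are distinct non-parallel
lines (any two of them meet in exactly one point). -/
def GeneralPosition {n : ℕ} (p : Fin n → Pt) : Prop :=
  (∀ x : Pt, CellPoint p x ∨ EdgePoint p x ∨ Vertex2I p x ∨ Vertex3I p x) ∧
  (∀ i j u v : Fin n, i ≠ j → u ≠ v → ({i, j} : Set (Fin n)) ≠ {u, v} →
    ∃! x : Pt, dist x (p i) = dist x (p j) ∧ dist x (p u) = dist x (p v))

/-- The set `{0,1,…,n−1}` viewed inside `ℚ`. -/
def codeRange (n : ℕ) : Set ℚ := {q | ∃ m : ℕ, m < n ∧ q = m}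

section Ties

variable {ι α : Type*} {f : ι → α} {i j k : ι}

structure UniqueTie (f : ι → α) (i j : ι) : Prop where
  ne : i ≠ j
  eq : f i = f j
  eq_of_apply_eq : ∀ k l, k ≠ i → k ≠ j → f l = f k → l = k

lemma UniqueTie.symm (h : UniqueTie f i j) : UniqueTie f j i :=
  ⟨h.ne.symm, h.eq.symm, fun k l hkj hki => h.eq_of_apply_eq k l hki hkj⟩

lemma UniqueTie.setOf_ne_and_eq_eq_empty (h : UniqueTie f i j) (hki : k ≠ i) (hkj : k ≠ j) :
    {l | l ≠ k ∧ f l = f k} = ∅ :=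
  Set.eq_empty_of_forall_notMem fun l ⟨hlk, hl⟩ => hlk (h.eq_of_apply_eq k l hki hkj hl)

lemma UniqueTie.setOf_ne_and_eq_eq_singleton (h : UniqueTie f i j) :
    {l | l ≠ i ∧ f l = f i} = {j} := by
  ext l
  refine ⟨fun ⟨hli, hl⟩ => ?_, fun hl => ⟨hl ▸ h.ne.symm, hl ▸ h.eq.symm⟩⟩
  by_contra hlj
  exact hli (h.eq_of_apply_eq l i hli hlj hl.symm).symm

end Ties

section UpperCount

open Finset

variable {ι α : Type*} [Fintype ι] [LinearOrder α] {f : ι → α}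

variable (f) in
def upperCount (k : ι) : ℕ := #{l | f k < f l}

lemma upperCount_lt_upperCount {k l : ι} (h : f k < f l) : upperCount f l < upperCount f k :=
  card_lt_card <| (ssubset_iff_of_subset fun _ hm => by simp_all [h.trans]).2
    ⟨l, by simpa using h, by simp⟩

lemma UniqueTie.upperCount_right_eq {i j : ι} (h : UniqueTie f i j) :
    upperCount f j = upperCount f i := by
  simp only [upperCount, h.eq]

lemma upperCount_lt_card (k : ι) : upperCount f k < Fintype.card ι :=
  card_lt_univ_of_notMem (x := k) (by simp)

variable [DecidableEq ι] {i j : ι}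

lemma upperCount_add_two_le (hij : i ≠ j) (he : f i = f j)
    {s : Finset ι} (hs : ∀ l, f i ≤ f l → l ∈ s) : upperCount f i + 2 ≤ #s :=
  calc upperCount f i + 2 = #(insert i (insert j ({l | f i < f l} : Finset ι))) := by
        rw [card_insert_of_notMem (by simp [hij, -ne_eq]), card_insert_of_notMem (by simp [he])]
        rfl
    _ ≤ #s := card_le_card fun l hl => hs l <| by
        simp only [mem_insert, mem_filter, mem_univ, true_and] at hl
        rcases hl with rfl | rfl | h
        exacts [le_rfl, he.le, h.le]

lemma UniqueTie.upperCount_add_two_le_card (h : UniqueTie f i j) :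
    upperCount f i + 2 ≤ Fintype.card ι :=
  upperCount_add_two_le h.ne h.eq fun l _ => mem_univ l

lemma upperCount_add_two_le_upperCount (hij : i ≠ j) (he : f i = f j) {k : ι}
    (hk : f k < f i) : upperCount f i + 2 ≤ upperCount f k :=
  upperCount_add_two_le hij he fun l hl => by simpa using hk.trans_le hl

theorem UniqueTie.bijOn_upperCount (h : UniqueTie f i j) :
    Set.BijOn (upperCount f) {k | k ≠ i ∧ k ≠ j}
      (Set.Iio (Fintype.card ι) \ {upperCount f i, upperCount f i + 1}) := by
  have hS : ((univ \ {i, j} : Finset ι) : Set ι) = {k | k ≠ i ∧ k ≠ j} := by ext; simp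
  have hT : ((range (Fintype.card ι) \ {upperCount f i, upperCount f i + 1} : Finset ℕ) : Set ℕ)
      = Set.Iio (Fintype.card ι) \ {upperCount f i, upperCount f i + 1} := by ext; simp
  have hmaps : Set.MapsTo (upperCount f) {k | k ≠ i ∧ k ≠ j}
      (Set.Iio (Fintype.card ι) \ {upperCount f i, upperCount f i + 1}) := by
    rintro k ⟨hki, hkj⟩
    refine ⟨upperCount_lt_card k, ?_⟩
    simp only [Set.mem_insert_iff, Set.mem_singleton_iff]
    rcases lt_trichotomy (f k) (f i) with hk | hk | hk
    · have := upperCount_add_two_le_upperCount h.ne h.eq hk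
      omega
    · exact absurd (h.eq_of_apply_eq k i hki hkj hk.symm) hki.symm
    · have := upperCount_lt_upperCount hk
      omega
  have hinj : Set.InjOn (upperCount f) {k | k ≠ i ∧ k ≠ j} := by
    rintro k ⟨hki, hkj⟩ l - hkl
    rcases lt_trichotomy (f k) (f l) with hkl' | hkl' | hkl'
    · exact absurd hkl (upperCount_lt_upperCount hkl').ne'
    · exact (h.eq_of_apply_eq k l hki hkj hkl'.symm).symm
    · exact absurd hkl (upperCount_lt_upperCount hkl').ne
  refine ⟨hmaps, hinj, ?_⟩
  rw [← hS] at hinj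
  rw [← hS, ← hT] at hmaps ⊢
  refine surjOn_of_injOn_of_card_le _ hmaps hinj ?_
  have hz := h.upperCount_add_two_le_card
  rw [card_univ_sdiff, card_pair h.ne, card_sdiff_of_subset, card_range, card_pair (by omega)]
  · simp only [insert_subset_iff, mem_range, singleton_subset_iff]
    omega

end UpperCount

lemma codeRange_eq_image (n : ℕ) : codeRange n = (Nat.cast : ℕ → ℚ) '' Set.Iio n := by
  ext q
  simp [codeRange, eq_comm]

lemma code_eq_upperCount_add {n : ℕ} (p : Fin n → Pt) (x : Pt) (k : Fin n) :
    code p x k = upperCount (fun l => dist x (p l)) k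
      + 1/2 * {l | l ≠ k ∧ dist x (p l) = dist x (p k)}.ncard := by
  rw [code, upperCount, ← Set.ncard_coe_finset]
  congr
  ext l
  simpa using fun h (hl : l = k) => (hl ▸ h).false

section Code

variable {n : ℕ} {p : Fin n → Pt} {x : Pt} {i j k : Fin n}

lemma UniqueTie.code_eq_upperCount (h : UniqueTie (fun l => dist x (p l)) i j)
    (hki : k ≠ i) (hkj : k ≠ j) : code p x k = upperCount (fun l => dist x (p l)) k := by
  rw [code_eq_upperCount_add, h.setOf_ne_and_eq_eq_empty hki hkj, Set.ncard_empty]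
  simp

lemma UniqueTie.code_eq_upperCount_add_half (h : UniqueTie (fun l => dist x (p l)) i j) :
    code p x i = upperCount (fun l => dist x (p l)) i + 1/2 := by
  rw [code_eq_upperCount_add, h.setOf_ne_and_eq_eq_singleton, Set.ncard_singleton]
  simp

lemma uniqueTie_of_tie (htie : Tie p x i j)
    (huniq : ∀ u v, Tie p x u v → ({u, v} : Set (Fin n)) = {i, j}) :
    UniqueTie (fun l => dist x (p l)) i j := by
  refine ⟨htie.1, htie.2, fun k l hki hkj hlk => ?_⟩
  by_contra hne
  have hk : k ∈ ({l, k} : Set (Fin n)) := Set.mem_insert_of_mem l rfl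
  rw [huniq l k ⟨hne, hlk⟩] at hk
  rcases hk with rfl | rfl <;> contradiction

end Code

theorem edge_code_base_general {n : ℕ} (p : Fin n → Pt)
    (x : Pt) (i j : Fin n)
    (htie : Tie p x i j)
    (huniq : ∀ u v, Tie p x u v → ({u, v} : Set (Fin n)) = {i, j}) :
    ∃ z : ℕ, z ≤ n - 2 ∧
      code p x i = (z : ℚ) + 1/2 ∧ code p x j = (z : ℚ) + 1/2 ∧
      Set.BijOn (code p x) {k : Fin n | k ≠ i ∧ k ≠ j}
        (codeRange n \ {(z : ℚ), (z : ℚ) + 1}) := by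
  have h := uniqueTie_of_tie htie huniq
  have hz := h.upperCount_add_two_le_card
  have hbij := (Nat.cast_injective (R := ℚ)).injOn.bijOn_image.comp h.bijOn_upperCount
  rw [Fintype.card_fin, Set.image_sdiff Nat.cast_injective, Set.image_pair,
    ← codeRange_eq_image, Nat.cast_succ] at hbij
  refine ⟨_, by rw [Fintype.card_fin] at hz; omega, h.code_eq_upperCount_add_half,
    by rw [h.symm.code_eq_upperCount_add_half, h.upperCount_right_eq],
    hbij.congr fun k ⟨hki, hkj⟩ => (h.code_eq_upperCount hki hkj).symm⟩

/-- an edge point with unique tie `{i,j}` has `code(x)_i = code(x)_j = z + 1/2`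
for some `0 ≤ z ≤ n−2`, and the restriction of the code to the remaining indices is a
bijection onto `{0,…,n−1} ∖ {z, z+1}`. -/
theorem edge_code_base {n : ℕ} (hn : 2 ≤ n) (p : Fin n → Pt)
    (hp : Function.Injective p) (x : Pt) (i j : Fin n)
    (htie : Tie p x i j)
    (huniq : ∀ u v, Tie p x u v → ({u, v} : Set (Fin n)) = {i, j}) :
    ∃ z : ℕ, z ≤ n - 2 ∧
      code p x i = (z : ℚ) + 1/2 ∧ code p x j = (z : ℚ) + 1/2 ∧
      Set.BijOn (code p x) {k : Fin n | k ≠ i ∧ k ≠ j}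
        (codeRange n \ {(z : ℚ), (z : ℚ) + 1}) :=
  edge_code_base_general p x i j htie huniq
end
end

section
/- If x ∈ ℝ² is a 2-I vertex point with ties {i,j} and {u,v} (so i,j,u,v are pairwise distinct), then there exist integers z₁, z₂ with 0 ≤ z₁ and z₁ + 2 ≤ z₂ ≤ n−2 such that the two common values code(x)_i = code(x)_j and code(x)_u = code(x)_v are, in some order, z₁ + 1/2 and z₂ + 1/2, and the restriction of code(x) to the remaining n−4 indices is a bijection onto {0,1,…,n−1} ∖ {z₁, z₁+1, z₂, z₂+1}. -/
noncomputable section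

open Metric

/-! Put `d k = dist x (p k)` and let `numAbove d k` count the indices strictly farther than `k`;
then `code k` is `numAbove d k` plus half the number of tie partners of `k`. Each tied pair
`{i, j}` occupies the two positions `numAbove d i` and `numAbove d i + 1` of the decreasing order
of `d`, so the `n - 4` untied indices receive pairwise distinct values of `numAbove` avoiding the
four positions taken by the two pairs; as there are as many untied indices as free positions,
they fill all of them. -/

open Finset

section NumAbove

variable {ι α : Type*} [Fintype ι] [LinearOrder α]

def numAbove (d : ι → α) (k : ι) : ℕ := #{l | d k < d l}

variable {d : ι → α} {i j k m u v : ι}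

lemma numAbove_lt_numAbove (h : d k < d m) : numAbove d m < numAbove d k := by
  refine card_lt_card ((ssubset_iff_of_subset fun l hl => ?_).2 ⟨m, by simp [h], by simp⟩)
  simp only [mem_filter, mem_univ, true_and] at hl ⊢
  exact h.trans hl

lemma numAbove_eq_numAbove_iff : numAbove d k = numAbove d m ↔ d k = d m := by
  refine ⟨fun h => ?_, fun h => by simp only [numAbove, h]⟩
  rcases lt_trichotomy (d k) (d m) with hlt | heq | hgt
  · exact absurd h (numAbove_lt_numAbove hlt).ne'
  · exact heq
  · exact absurd h (numAbove_lt_numAbove hgt).ne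

lemma numAbove_lt_card (d : ι → α) (k : ι) : numAbove d k < Fintype.card ι :=
  card_lt_univ_of_notMem (x := k) (by simp)

lemma numAbove_add_two_le (hij : i ≠ j) (hdij : d i = d j) {s : Finset ι}
    (hs : ∀ l, d i ≤ d l → l ∈ s) : numAbove d i + 2 ≤ #s := by
  classical
  have hsub : insert i (insert j ({l | d i < d l} : Finset ι)) ⊆ s := by
    intro l hl
    simp only [mem_insert, mem_filter, mem_univ, true_and] at hl
    rcases hl with rfl | rfl | hl
    exacts [hs _ le_rfl, hs _ hdij.le, hs _ hl.le]
  have := card_le_card hsub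
  rwa [card_insert_of_notMem (by simp [hij, hdij]), card_insert_of_notMem (by simp [hdij])] at this

lemma numAbove_add_two_le_numAbove (hij : i ≠ j) (hdij : d i = d j) (hk : d k < d i) :
    numAbove d i + 2 ≤ numAbove d k :=
  numAbove_add_two_le hij hdij fun l hl => by simpa using hk.trans_le hl

lemma numAbove_add_two_le_card (hij : i ≠ j) (hdij : d i = d j) :
    numAbove d i + 2 ≤ Fintype.card ι :=
  numAbove_add_two_le hij hdij fun l _ => mem_univ l

lemma numAbove_ne_of_tie (hij : i ≠ j) (hdij : d i = d j) (hk : d k ≠ d i) :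
    numAbove d k ≠ numAbove d i ∧ numAbove d k ≠ numAbove d i + 1 := by
  refine ⟨mt numAbove_eq_numAbove_iff.1 hk, ?_⟩
  rcases hk.lt_or_gt with hlt | hgt
  · have := numAbove_add_two_le_numAbove hij hdij hlt
    omega
  · have := numAbove_lt_numAbove hgt
    omega

lemma numAbove_add_two_le_or (hij : i ≠ j) (hdij : d i = d j) (huv : u ≠ v) (hduv : d u = d v)
    (hdui : d u ≠ d i) :
    numAbove d i + 2 ≤ numAbove d u ∨ numAbove d u + 2 ≤ numAbove d i := by
  rcases hdui.lt_or_gt with hlt | hgt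
  · exact .inl (numAbove_add_two_le_numAbove hij hdij hlt)
  · exact .inr (numAbove_add_two_le_numAbove huv hduv hgt)

end NumAbove

lemma card_range_sdiff_pairs {n a b : ℕ} (ha : a + 2 ≤ n) (hb : b + 2 ≤ n)
    (hab : a + 2 ≤ b ∨ b + 2 ≤ a) : #(range n \ {a, a + 1, b, b + 1}) = n - 4 := by
  rw [card_sdiff_of_subset, card_range, card_insert_of_notMem (by simp; omega),
    card_insert_of_notMem (by simp; omega), card_pair (by omega)]
  intro z hz
  simp only [mem_insert, mem_singleton] at hz
  simp only [mem_range]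
  omega

theorem bijOn_numAbove_of_two_ties {ι α : Type*} [Fintype ι] [LinearOrder α] {d : ι → α}
    {i j u v : ι} (hij : i ≠ j) (hiu : i ≠ u) (hiv : i ≠ v) (hju : j ≠ u) (hjv : j ≠ v)
    (huv : u ≠ v) (hdij : d i = d j) (hduv : d u = d v) (hdui : d u ≠ d i)
    (huntied : ∀ k, k ≠ i → k ≠ j → k ≠ u → k ≠ v → ∀ l ≠ k, d l ≠ d k) :
    Set.BijOn (numAbove d) {k | k ≠ i ∧ k ≠ j ∧ k ≠ u ∧ k ≠ v}
      ↑(range (Fintype.card ι) \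
        {numAbove d i, numAbove d i + 1, numAbove d u, numAbove d u + 1}) := by
  classical
  have hdom : {k | k ≠ i ∧ k ≠ j ∧ k ≠ u ∧ k ≠ v} = ↑({i, j, u, v}ᶜ : Finset ι) := by
    ext
    simp
    tauto
  have hi := numAbove_add_two_le_card hij hdij
  have hu := numAbove_add_two_le_card huv hduv
  have hmaps : Set.MapsTo (numAbove d) {k | k ≠ i ∧ k ≠ j ∧ k ≠ u ∧ k ≠ v}
      ↑(range (Fintype.card ι) \
        {numAbove d i, numAbove d i + 1, numAbove d u, numAbove d u + 1}) := by
    rintro k ⟨hki, hkj, hku, hkv⟩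
    have hk_i := numAbove_ne_of_tie hij hdij (huntied k hki hkj hku hkv i (Ne.symm hki)).symm
    have hk_u := numAbove_ne_of_tie huv hduv (huntied k hki hkj hku hkv u (Ne.symm hku)).symm
    simp only [coe_sdiff, Set.mem_sdiff, mem_coe, mem_range, mem_insert, mem_singleton]
    exact ⟨numAbove_lt_card d k, by omega⟩
  have hinj : Set.InjOn (numAbove d) {k | k ≠ i ∧ k ≠ j ∧ k ≠ u ∧ k ≠ v} := by
    rintro k ⟨hki, hkj, hku, hkv⟩ m - h
    by_contra hkm
    exact huntied k hki hkj hku hkv m (Ne.symm hkm) (numAbove_eq_numAbove_iff.1 h).symm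
  rw [hdom] at hmaps hinj ⊢
  refine ⟨hmaps, hinj, surjOn_of_injOn_of_card_le _ hmaps hinj ?_⟩
  rw [card_range_sdiff_pairs hi hu (numAbove_add_two_le_or hij hdij huv hduv hdui), card_compl,
    card_insert_of_notMem (by simp [*]), card_insert_of_notMem (by simp [*]), card_pair huv]

lemma codeRange_sdiff_eq_image (n a b : ℕ) :
    codeRange n \ {(a : ℚ), (a : ℚ) + 1, (b : ℚ), (b : ℚ) + 1}
      = Nat.cast '' ↑(range n \ {a, a + 1, b, b + 1}) := by
  have hrange : codeRange n = Nat.cast '' ↑(range n) := by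
    ext q
    simp only [codeRange, Set.mem_ofPred_eq, coe_range, Set.mem_image, Set.mem_Iio]
    exact exists_congr fun m => and_congr_right fun _ => eq_comm
  rw [hrange, coe_sdiff, Set.image_sdiff Nat.cast_injective]
  simp [Set.image_insert_eq]

section Code

variable {n : ℕ} (p : Fin n → Pt) (x : Pt)

lemma code_eq_numAbove_add (k : Fin n) :
    code p x k = numAbove (fun l => dist x (p l)) k + 1 / 2 * {l | Tie p x l k}.ncard := by
  have hfar : {l | l ≠ k ∧ dist x (p k) < dist x (p l)}
      = ↑({l | dist x (p k) < dist x (p l)} : Finset (Fin n)) := by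
    ext l
    simp only [Set.mem_ofPred_eq, coe_filter, mem_univ, true_and, and_iff_right_iff_imp]
    rintro h rfl
    exact lt_irrefl _ h
  rw [code, hfar, Set.ncard_coe_finset]
  rfl

lemma code_eq_of_tie_iff {k m : Fin n} (h : ∀ l, Tie p x l k ↔ l = m) :
    code p x k = numAbove (fun l => dist x (p l)) k + 1 / 2 := by
  rw [code_eq_numAbove_add, show {l | Tie p x l k} = {m} from Set.ext h, Set.ncard_singleton]
  norm_num

lemma code_eq_of_forall_dist_ne {k : Fin n} (h : ∀ l ≠ k, dist x (p l) ≠ dist x (p k)) :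
    code p x k = numAbove (fun l => dist x (p l)) k := by
  rw [code_eq_numAbove_add,
    show {l | Tie p x l k} = ∅ from Set.eq_empty_of_forall_notMem fun l hl => h l hl.1 hl.2]
  simp

lemma tie_iff_of_two_ties {i j u v : Fin n} (htie₁ : Tie p x i j) (htie₂ : Tie p x u v)
    (hexact : ∀ a b, Tie p x a b →
      ({a, b} : Set (Fin n)) = {i, j} ∨ ({a, b} : Set (Fin n)) = {u, v}) (a b : Fin n) :
    Tie p x a b ↔ (a = i ∧ b = j) ∨ (a = j ∧ b = i) ∨ (a = u ∧ b = v) ∨ (a = v ∧ b = u) := by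
  refine ⟨fun h => by simpa only [Set.pair_eq_pair_iff, or_assoc] using hexact a b h, ?_⟩
  rintro (⟨rfl, rfl⟩ | ⟨rfl, rfl⟩ | ⟨rfl, rfl⟩ | ⟨rfl, rfl⟩)
  exacts [htie₁, ⟨htie₁.1.symm, htie₁.2.symm⟩, htie₂, ⟨htie₂.1.symm, htie₂.2.symm⟩]

lemma bijOn_code_of_forall_dist_ne {s : Set (Fin n)} {t : Finset ℕ}
    (huntied : ∀ k ∈ s, ∀ l ≠ k, dist x (p l) ≠ dist x (p k))
    (h : Set.BijOn (numAbove fun l => dist x (p l)) s ↑t) :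
    Set.BijOn (code p x) s (Nat.cast '' ↑t) :=
  (Nat.cast_injective.injOn.bijOn_image.comp h).congr fun k hk =>
    (code_eq_of_forall_dist_ne p x (huntied k hk)).symm

end Code

theorem vertex2I_code_base_general {n : ℕ} (p : Fin n → Pt)
    (x : Pt) (i j u v : Fin n)
    (hij : i ≠ j) (hiu : i ≠ u) (hiv : i ≠ v) (hju : j ≠ u) (hjv : j ≠ v) (huv : u ≠ v)
    (htie₁ : Tie p x i j) (htie₂ : Tie p x u v)
    (hexact : ∀ a b, Tie p x a b →
      ({a, b} : Set (Fin n)) = {i, j} ∨ ({a, b} : Set (Fin n)) = {u, v}) :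
    ∃ z₁ z₂ : ℕ, z₁ + 2 ≤ z₂ ∧ z₂ ≤ n - 2 ∧
      code p x i = code p x j ∧ code p x u = code p x v ∧
      ((code p x i = (z₁ : ℚ) + 1/2 ∧ code p x u = (z₂ : ℚ) + 1/2) ∨
       (code p x i = (z₂ : ℚ) + 1/2 ∧ code p x u = (z₁ : ℚ) + 1/2)) ∧
      Set.BijOn (code p x) {k : Fin n | k ≠ i ∧ k ≠ j ∧ k ≠ u ∧ k ≠ v}
        (codeRange n \ {(z₁ : ℚ), (z₁ : ℚ) + 1, (z₂ : ℚ), (z₂ : ℚ) + 1}) := by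
  have htie := tie_iff_of_two_ties p x htie₁ htie₂ hexact
  have hci := code_eq_of_tie_iff p x (k := i) (m := j) fun l => by rw [htie]; grind
  have hcj := code_eq_of_tie_iff p x (k := j) (m := i) fun l => by rw [htie]; grind
  have hcu := code_eq_of_tie_iff p x (k := u) (m := v) fun l => by rw [htie]; grind
  have hcv := code_eq_of_tie_iff p x (k := v) (m := u) fun l => by rw [htie]; grind
  set d : Fin n → ℝ := fun l => dist x (p l)
  have hdij : d i = d j := htie₁.2
  have hduv : d u = d v := htie₂.2
  have hdui : d u ≠ d i := fun hd => by have := (htie u i).1 ⟨hiu.symm, hd⟩; grind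
  have huntied (k : Fin n) (hki : k ≠ i) (hkj : k ≠ j) (hku : k ≠ u) (hkv : k ≠ v) (l : Fin n)
      (hlk : l ≠ k) : d l ≠ d k := fun hd => by have := (htie l k).1 ⟨hlk, hd⟩; grind
  have hbij := bijOn_code_of_forall_dist_ne p x
    (fun k hk => huntied k hk.1 hk.2.1 hk.2.2.1 hk.2.2.2)
    (bijOn_numAbove_of_two_ties hij hiu hiv hju hjv huv hdij hduv hdui huntied)
  rw [Fintype.card_fin, ← codeRange_sdiff_eq_image] at hbij
  have hcij : code p x i = code p x j := by rw [hci, hcj, numAbove_eq_numAbove_iff.2 hdij]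
  have hcuv : code p x u = code p x v := by rw [hcu, hcv, numAbove_eq_numAbove_iff.2 hduv]
  have hi := numAbove_add_two_le_card hij hdij
  have hu := numAbove_add_two_le_card huv hduv
  rw [Fintype.card_fin] at hi hu
  rcases numAbove_add_two_le_or hij hdij huv hduv hdui with hiu_gap | hui_gap
  · exact ⟨_, _, hiu_gap, by omega, hcij, hcuv, .inl ⟨hci, hcu⟩, hbij⟩
  · refine ⟨_, _, hui_gap, by omega, hcij, hcuv, .inr ⟨hci, hcu⟩, ?_⟩
    convert hbij using 2
    ext
    simp only [Set.mem_insert_iff, Set.mem_singleton_iff]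
    tauto

/-- a 2-I vertex point with ties `{i,j}` and `{u,v}` has common values
`z₁ + 1/2` and `z₂ + 1/2` (in some order) with `0 ≤ z₁`, `z₁ + 2 ≤ z₂ ≤ n−2`, and the
restriction of the code to the remaining `n−4` indices is a bijection onto
`{0,…,n−1} ∖ {z₁, z₁+1, z₂, z₂+1}`. -/
theorem vertex2I_code_base {n : ℕ} (hn : 2 ≤ n) (p : Fin n → Pt)
    (hp : Function.Injective p) (x : Pt) (i j u v : Fin n)
    (hij : i ≠ j) (hiu : i ≠ u) (hiv : i ≠ v) (hju : j ≠ u) (hjv : j ≠ v) (huv : u ≠ v)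
    (htie₁ : Tie p x i j) (htie₂ : Tie p x u v)
    (hexact : ∀ a b, Tie p x a b →
      ({a, b} : Set (Fin n)) = {i, j} ∨ ({a, b} : Set (Fin n)) = {u, v}) :
    ∃ z₁ z₂ : ℕ, z₁ + 2 ≤ z₂ ∧ z₂ ≤ n - 2 ∧
      code p x i = code p x j ∧ code p x u = code p x v ∧
      ((code p x i = (z₁ : ℚ) + 1/2 ∧ code p x u = (z₂ : ℚ) + 1/2) ∨
       (code p x i = (z₂ : ℚ) + 1/2 ∧ code p x u = (z₁ : ℚ) + 1/2)) ∧
      Set.BijOn (code p x) {k : Fin n | k ≠ i ∧ k ≠ j ∧ k ≠ u ∧ k ≠ v}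
        (codeRange n \ {(z₁ : ℚ), (z₁ : ℚ) + 1, (z₂ : ℚ), (z₂ : ℚ) + 1}) :=
  vertex2I_code_base_general p x i j u v hij hiu hiv hju hjv huv htie₁ htie₂ hexact
end
end

section
/- Different types of particles are never equi-base: if x, y ∈ ℝ² are of two different types among cell point, edge point, 2-I vertex point and 3-I vertex point, then there is no permutation σ of {1,…,n} such that code(x)_i = code(y)_{σ(i)} for all i (their chromatic codes have different multisets of values). -/
noncomputable section

open Metric

/-- The four particle types. -/
inductive PType where
  | cell : PType
  | edge : PType
  | vtx2 : PType
  | vtx3 : PType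

/-- `x` is a particle point of the given type. -/
def HasPType {n : ℕ} (p : Fin n → Pt) (x : Pt) : PType → Prop
  | .cell => CellPoint p x
  | .edge => EdgePoint p x
  | .vtx2 => Vertex2I p x
  | .vtx3 => Vertex3I p x


/-! Two indices tie at `x` exactly when their codes agree, because the code is strictly
decreasing in the distance to `x`. Hence the number of ties (none, one, two and three for the
four types) can be read off from the multiset of code values. -/

open Finset

section Code

variable {n : ℕ} (p : Fin n → Pt) (x : Pt)

def farther (r : ℝ) : Finset (Fin n) := {k | r < dist x (p k)}

def level (r : ℝ) : Finset (Fin n) := {k | dist x (p k) = r}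

def codeAt (r : ℝ) : ℚ := #(farther p x r) + ((#(level p x r) : ℚ) - 1) / 2

theorem code_eq_codeAt (i : Fin n) : code p x i = codeAt p x (dist x (p i)) := by
  have hfar : {j | j ≠ i ∧ dist x (p i) < dist x (p j)} = ↑(farther p x (dist x (p i))) := by
    ext j
    simp only [farther, Set.mem_ofPred_eq, coe_filter, mem_univ, true_and]
    exact ⟨And.right, fun h => ⟨by rintro rfl; exact h.false, h⟩⟩
  have hlevel : {j | j ≠ i ∧ dist x (p j) = dist x (p i)}
      = ↑((level p x (dist x (p i))).erase i) := by
    ext j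
    simp [level, and_comm]
  have hmem : i ∈ level p x (dist x (p i)) := by simp [level]
  rw [code, codeAt, hfar, hlevel, Set.ncard_coe_finset, Set.ncard_coe_finset,
    ← card_erase_add_one hmem]
  push_cast
  ring

variable {p x}

theorem code_eq_of_dist_eq {i j : Fin n} (h : dist x (p i) = dist x (p j)) :
    code p x i = code p x j := by
  rw [code_eq_codeAt, code_eq_codeAt, h]

theorem card_farther_add_card_level_le {r s : ℝ} (h : r < s) :
    #(farther p x s) + #(level p x s) ≤ #(farther p x r) := by
  have hdisj : Disjoint (farther p x s) (level p x s) :=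
    disjoint_filter.2 fun _ _ hlt heq => hlt.ne' heq
  rw [← card_union_of_disjoint hdisj]
  refine card_le_card fun k hk => ?_
  simp only [farther, level, mem_union, mem_filter, mem_univ, true_and] at hk ⊢
  rcases hk with hk | hk <;> linarith

theorem code_lt_of_dist_lt {i j : Fin n} (h : dist x (p i) < dist x (p j)) :
    code p x j < code p x i := by
  have hcard : (#(farther p x (dist x (p j))) : ℚ) + #(level p x (dist x (p j)))
      ≤ #(farther p x (dist x (p i))) := by
    exact_mod_cast card_farther_add_card_level_le h
  have hi : (1 : ℚ) ≤ #(level p x (dist x (p i))) := by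
    exact_mod_cast card_pos.2 ⟨i, by simp [level]⟩
  rw [code_eq_codeAt, code_eq_codeAt, codeAt, codeAt]
  linarith

theorem tie_iff_code_eq {i j : Fin n} : Tie p x i j ↔ i ≠ j ∧ code p x i = code p x j := by
  refine and_congr_right fun _ => ⟨code_eq_of_dist_eq, fun h => ?_⟩
  by_contra hne
  rcases lt_or_gt_of_ne hne with hlt | hlt
  · exact (code_lt_of_dist_lt hlt).ne' h
  · exact (code_lt_of_dist_lt hlt).ne h

variable (p x) in
def tieSet : Set (Fin n × Fin n) := {q | Tie p x q.1 q.2}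

theorem ncard_tieSet_eq_of_perm {y : Pt} (σ : Equiv.Perm (Fin n))
    (h : ∀ i, code p x i = code p y (σ i)) : (tieSet p x).ncard = (tieSet p y).ncard := by
  have himage : tieSet p y = σ.prodCongr σ '' tieSet p x := by
    rw [Equiv.image_eq_preimage_symm]
    ext ⟨a, b⟩
    simp [tieSet, tie_iff_code_eq, h]
  rw [himage, Set.ncard_image_of_injective _ (σ.prodCongr σ).injective]

theorem ncard_tieSet_of_tie_iff {T : Finset (Fin n × Fin n)}
    (h : ∀ a b, Tie p x a b ↔ (a, b) ∈ T) :
    (tieSet p x).ncard = #T := by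
  rw [← Set.ncard_coe_finset]
  congr 1
  ext ⟨a, b⟩
  exact h a b

theorem CellPoint.ncard_tieSet (h : CellPoint p x) : (tieSet p x).ncard = 0 := by
  simp [tieSet, h _ _]

theorem EdgePoint.ncard_tieSet (h : EdgePoint p x) : (tieSet p x).ncard = 2 := by
  obtain ⟨i, j, hij, hall⟩ := h
  have htie : ∀ a b, Tie p x a b ↔ (a, b) ∈ ({i, j} : Finset (Fin n)).offDiag := by
    intro a b
    constructor
    · intro hab
      have hpair := hall a b hab
      rw [Set.pair_eq_pair_iff] at hpair
      grind [Tie]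
    · grind [Tie]
  rw [ncard_tieSet_of_tie_iff htie, offDiag_card, card_pair hij.1]

theorem Vertex2I.ncard_tieSet (h : Vertex2I p x) : (tieSet p x).ncard = 4 := by
  obtain ⟨i, j, u, v, hij, hiu, hiv, hju, hjv, huv, htij, htuv, hall⟩ := h
  have hdisj : Disjoint ({i, j} : Finset (Fin n)).offDiag ({u, v} : Finset (Fin n)).offDiag := by
    grind [disjoint_left]
  have htie : ∀ a b, Tie p x a b ↔
      (a, b) ∈ ({i, j} : Finset (Fin n)).offDiag ∪ ({u, v} : Finset (Fin n)).offDiag := by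
    intro a b
    constructor
    · intro hab
      have hpair := hall a b hab
      simp only [Set.pair_eq_pair_iff] at hpair
      grind [Tie]
    · grind [Tie]
  rw [ncard_tieSet_of_tie_iff htie, card_union_of_disjoint hdisj, offDiag_card, offDiag_card,
    card_pair hij, card_pair huv]

theorem Vertex3I.ncard_tieSet (h : Vertex3I p x) : (tieSet p x).ncard = 6 := by
  obtain ⟨i, j, k, hij, hik, hjk, hall⟩ := h
  have htie : ∀ a b, Tie p x a b ↔ (a, b) ∈ ({i, j, k} : Finset (Fin n)).offDiag := by
    intro a b
    rw [hall, mem_offDiag]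
    simp only [Set.mem_insert_iff, Set.mem_singleton_iff, mem_insert, mem_singleton]
    tauto
  have hcard : #({i, j, k} : Finset (Fin n)) = 3 :=
    card_eq_three.2 ⟨i, j, k, hij, hik, hjk, rfl⟩
  rw [ncard_tieSet_of_tie_iff htie, offDiag_card, hcard]

def PType.numTies : PType → ℕ
  | .cell => 0
  | .edge => 1
  | .vtx2 => 2
  | .vtx3 => 3

theorem PType.numTies_injective : Function.Injective PType.numTies := by
  intro s t h
  cases s <;> cases t <;> simp_all [PType.numTies]

theorem ncard_tieSet_of_hasPType {t : PType} (h : HasPType p x t) :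
    (tieSet p x).ncard = 2 * t.numTies := by
  cases t
  · exact CellPoint.ncard_tieSet h
  · exact EdgePoint.ncard_tieSet h
  · exact Vertex2I.ncard_tieSet h
  · exact Vertex3I.ncard_tieSet h

end Code

theorem different_types_not_equibase_general {n : ℕ} (p : Fin n → Pt)
    (x y : Pt) (tx ty : PType) (hty : tx ≠ ty)
    (hx : HasPType p x tx) (hy : HasPType p y ty) :
    ¬ ∃ σ : Equiv.Perm (Fin n), ∀ i, code p x i = code p y (σ i) := by
  rintro ⟨σ, hσ⟩
  have h := ncard_tieSet_eq_of_perm σ hσ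
  rw [ncard_tieSet_of_hasPType hx, ncard_tieSet_of_hasPType hy] at h
  exact hty (PType.numTies_injective (by omega))

/-- particles of different types are never equi-base: if `x` and `y` are of two
different types among cell/edge/2-I vertex/3-I vertex points, then no permutation of the
indices matches their chromatic codes. -/
theorem different_types_not_equibase {n : ℕ} (hn : 2 ≤ n) (p : Fin n → Pt)
    (hp : Function.Injective p) (x y : Pt) (tx ty : PType) (hty : tx ≠ ty)
    (hx : HasPType p x tx) (hy : HasPType p y ty) :
    ¬ ∃ σ : Equiv.Perm (Fin n), ∀ i, code p x i = code p y (σ i) :=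
  different_types_not_equibase_general p x y tx ty hty hx hy
end
end

section
/- Chromatic codes of edges are unique: if x and y are edge points with code(x) = code(y), then x and y lie on the same edge, i.e., they have the same tie and for all indices i, j one has dist(x,p_i) ≤ dist(x,p_j) if and only if dist(y,p_i) ≤ dist(y,p_j). Equivalently, any two distinct edges are not equi-color. -/
noncomputable section

open Metric

/-!
The code of `x` at `i` is the mid-rank of `dist x (p i)` among all the distances `dist x (p j)`,
counted from the top. Twice it equals `#{j | d_i < d_j} + #{j | d_i ≤ d_j} - 1`, a function of
`d_i` alone that strictly decreases in `d_i`. Hence the code of any point determines the weak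
ordering of its distances to the generators, and with it its ties.
-/

section MidRank

variable {ι α : Type*} [Finite ι] [LinearOrder α]

-- Chosen so that `code p x` is definitionally `midRank fun i => dist x (p i)`.
def midRank (f : ι → α) (i : ι) : ℚ :=
  (Set.ncard {j | j ≠ i ∧ f i < f j} : ℚ) + (1/2) * (Set.ncard {j | j ≠ i ∧ f j = f i} : ℚ)

theorem two_mul_midRank (f : ι → α) (i : ι) :
    2 * midRank f i = Set.ncard {j | f i < f j} + Set.ncard {j | f i ≤ f j} - 1 := by
  have h_gt : {j | j ≠ i ∧ f i < f j} = {j | f i < f j} := by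
    ext j
    simpa using fun h (hj : j = i) => (hj ▸ h).false
  have h_tie : {j | j ≠ i ∧ f j = f i} = {j | f j = f i} \ {i} := by
    ext j
    simp [and_comm]
  have h_ge : {j | f i ≤ f j} = {j | f i < f j} ∪ {j | f j = f i} := by
    ext j
    simp [le_iff_lt_or_eq, eq_comm]
  have h_disj : Disjoint {j | f i < f j} {j | f j = f i} :=
    Set.disjoint_left.2 fun j (h : f i < f j) (h' : f j = f i) => (h' ▸ h).false
  have h_card := Set.ncard_sdiff_singleton_add_one (show i ∈ {j | f j = f i} from rfl)
  rw [midRank, h_gt, h_tie, h_ge, Set.ncard_union_eq h_disj, ← h_card]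
  push_cast
  ring

theorem midRank_eq_of_eq {f : ι → α} {i j : ι} (h : f i = f j) : midRank f i = midRank f j := by
  have := two_mul_midRank f i
  rw [h, ← two_mul_midRank f j] at this
  linarith

theorem midRank_lt_of_lt {f : ι → α} {i j : ι} (h : f i < f j) : midRank f j < midRank f i := by
  have h_ge_sub : {k | f j ≤ f k} ⊆ {k | f i < f k} := fun k hk => h.trans_le hk
  have h_gt_ssub : {k | f j < f k} ⊂ {k | f j ≤ f k} :=
    (Set.ssubset_iff_of_subset fun k hk => le_of_lt hk).2 ⟨j, le_rfl, lt_irrefl _⟩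
  have h_gt_sub : {k | f i < f k} ⊆ {k | f i ≤ f k} := fun k hk => le_of_lt hk
  have h₁ := Set.ncard_lt_ncard h_gt_ssub
  have h₂ := Set.ncard_le_ncard h_ge_sub
  have h₃ := Set.ncard_le_ncard h_gt_sub
  have hi := two_mul_midRank f i
  have hj := two_mul_midRank f j
  have : (Set.ncard {k | f j < f k} : ℚ) + Set.ncard {k | f j ≤ f k}
      < Set.ncard {k | f i < f k} + Set.ncard {k | f i ≤ f k} := by
    exact_mod_cast by omega
  linarith

theorem midRank_le_midRank_iff {f : ι → α} {i j : ι} :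
    midRank f j ≤ midRank f i ↔ f i ≤ f j := by
  refine ⟨fun h => not_lt.1 fun hlt => (midRank_lt_of_lt hlt).not_ge h, fun h => ?_⟩
  rcases h.eq_or_lt with h | h
  · exact (midRank_eq_of_eq h).ge
  · exact (midRank_lt_of_lt h).le

theorem midRank_eq_midRank_iff {f : ι → α} {i j : ι} :
    midRank f i = midRank f j ↔ f i = f j := by
  rw [le_antisymm_iff, le_antisymm_iff, midRank_le_midRank_iff, midRank_le_midRank_iff, and_comm]

end MidRank

theorem dist_le_dist_iff_code_le {n : ℕ} (p : Fin n → Pt) (x : Pt) (i j : Fin n) :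
    dist x (p i) ≤ dist x (p j) ↔ code p x j ≤ code p x i :=
  (midRank_le_midRank_iff (f := fun k => dist x (p k))).symm

theorem dist_eq_dist_iff_code_eq {n : ℕ} (p : Fin n → Pt) (x : Pt) (i j : Fin n) :
    dist x (p i) = dist x (p j) ↔ code p x i = code p x j :=
  (midRank_eq_midRank_iff (f := fun k => dist x (p k))).symm

theorem edge_codes_unique_general {n : ℕ} (p : Fin n → Pt) (x y : Pt) (h : code p x = code p y) :
    (∀ i j, Tie p x i j ↔ Tie p y i j) ∧
    (∀ i j, dist x (p i) ≤ dist x (p j) ↔ dist y (p i) ≤ dist y (p j)) :=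
  ⟨fun i j => by simp only [Tie, dist_eq_dist_iff_code_eq, h],
    fun i j => by simp only [dist_le_dist_iff_code_le, h]⟩

/-- chromatic codes of edges are unique: two edge points with the same code lie
on the same edge, i.e. they have the same tie and induce the same weak ordering of distances
to the generators. -/
theorem edge_codes_unique {n : ℕ} (hn : 2 ≤ n) (p : Fin n → Pt)
    (hp : Function.Injective p) (x y : Pt)
    (hx : EdgePoint p x) (hy : EdgePoint p y) (h : code p x = code p y) :
    (∀ i j, Tie p x i j ↔ Tie p y i j) ∧
    (∀ i j, dist x (p i) ≤ dist x (p j) ↔ dist y (p i) ≤ dist y (p j)) :=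
  edge_codes_unique_general p x y h
end
end

section
/- If the generators are in general position, then the number of distinct chromatic codes attained by edge points of ℝ² equals C(n,2)² − 3·C(n,3), where C(n,k) is the binomial coefficient (this is the number of edges of the full-OACD). -/
noncomputable section

open Metric

/-!
An edge point with tie `{i, j}` lies on the perpendicular bisector of `p i, p j`, parametrized as
`bisectorPoint p i j t`. Along it `dist · (p m) ^ 2 - dist · (p k) ^ 2` is affine in `t`, with
nonzero slope for every other pair `{k, m}` by general position, so every other bisector crosses
it at a single parameter. The bisectors of `{i, k}` and `{j, k}` cross it at the same point (the
circumcentre of `p i, p j, p k`), and general position makes all remaining crossings distinct: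
there are `C(n-1, 2)` crossing parameters. Off them the point is an edge point whose code encodes
exactly the order of the distances, i.e. which crossings lie below `t`; so this bisector carries
`C(n-1, 2) + 1` codes. A code also determines which distances tie, so different bisectors carry
different codes, and the total is `C(n, 2) * (C(n-1, 2) + 1) = C(n, 2) ^ 2 - 3 * C(n, 3)`.
-/

open Finset
open scoped RealInnerProductSpace

section CountBelow

variable {α : Type*} [LinearOrder α]

def countBelow (V : Finset α) (t : α) : ℕ := #{v ∈ V | v < t}

lemma countBelow_eq_countBelow_iff {V : Finset α} {t t' : α} :
    countBelow V t = countBelow V t' ↔ ∀ v ∈ V, (v < t ↔ v < t') := by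
  wlog htt' : t ≤ t' generalizing t t'
  · simpa only [eq_comm, iff_comm] using this (le_of_not_ge htt')
  rw [← filter_inj']
  refine ⟨fun h => eq_of_subset_of_card_le ?_ h.ge, congrArg card⟩
  exact monotone_filter_right V fun _ _ hv => hv.trans_le htt'

lemma exists_countBelow_eq [DenselyOrdered α] [NoMinOrder α] (V : Finset α) {b : α}
    (hb : ∀ v ∈ V, v < b) {q : ℕ} (hq : q ≤ #V) :
    ∃ t < b, t ∉ V ∧ countBelow V t = q := by
  induction V using Finset.induction_on_max generalizing b q with
  | empty =>
    obtain ⟨t, ht⟩ := exists_lt b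
    exact ⟨t, ht, notMem_empty t, by simp_all [countBelow]⟩
  | insert a W hW ih =>
    have haW : a ∉ W := fun h => lt_irrefl a (hW a h)
    rw [card_insert_of_notMem haW] at hq
    rcases hq.lt_or_eq with hq | rfl
    · obtain ⟨t, hta, htW, hcount⟩ := ih hW (Nat.lt_succ_iff.mp hq)
      refine ⟨t, hta.trans (hb a (mem_insert_self a W)), ?_, ?_⟩
      · simp [htW, hta.ne]
      · rw [countBelow, filter_insert, if_neg hta.not_gt, ← countBelow, hcount]
    · obtain ⟨t, hat, htb⟩ := exists_between (hb a (mem_insert_self a W))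
      refine ⟨t, htb, ?_, ?_⟩
      · simp only [mem_insert, not_or]
        exact ⟨hat.ne', fun h => (hW t h).not_gt hat⟩
      · rw [countBelow, filter_true_of_mem, card_insert_of_notMem haW]
        simp only [mem_insert, forall_eq_or_imp]
        exact ⟨hat, fun w hw => (hW w hw).trans hat⟩

lemma image_countBelow_compl [DenselyOrdered α] [NoMinOrder α] [NoMaxOrder α] [Nonempty α]
    (V : Finset α) :
    countBelow V '' (↑V)ᶜ = Set.Iic #V := by
  obtain ⟨b₀, hb₀⟩ := V.bddAbove
  obtain ⟨b, hb⟩ := exists_gt b₀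
  ext q
  constructor
  · rintro ⟨t, -, rfl⟩
    exact card_filter_le V _
  · intro hq
    obtain ⟨t, -, htV, rfl⟩ := exists_countBelow_eq V (fun v hv => (hb₀ hv).trans_lt hb) hq
    exact ⟨t, htV, rfl⟩

end CountBelow

lemma Set.ncard_image_eq_ncard_image_of_fibers {α β γ : Type*} {f : α → β} {g : α → γ}
    {s : Set α} (h : ∀ a ∈ s, ∀ b ∈ s, f a = f b ↔ g a = g b) :
    (f '' s).ncard = (g '' s).ncard := by
  have hfst : Set.InjOn Prod.fst ((fun a => (f a, g a)) '' s) := by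
    rintro _ ⟨a, ha, rfl⟩ _ ⟨b, hb, rfl⟩ hab
    exact Prod.ext hab ((h a ha b hb).mp hab)
  have hsnd : Set.InjOn Prod.snd ((fun a => (f a, g a)) '' s) := by
    rintro _ ⟨a, ha, rfl⟩ _ ⟨b, hb, rfl⟩ hab
    exact Prod.ext ((h a ha b hb).mpr hab) hab
  calc (f '' s).ncard = (Prod.fst '' ((fun a => (f a, g a)) '' s)).ncard := by
        rw [Set.image_image]
    _ = (Prod.snd '' ((fun a => (f a, g a)) '' s)).ncard := by
        rw [hfst.ncard_image, hsnd.ncard_image]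
    _ = (g '' s).ncard := by rw [Set.image_image]

lemma Set.pair_eq_pair_iff_sym2_eq {α : Type*} {a b c d : α} :
    ({a, b} : Set α) = {c, d} ↔ s(a, b) = s(c, d) := by
  rw [Set.pair_eq_pair_iff, Sym2.eq_iff]

lemma pos_mul_sub_iff_pos_mul_sub {S r t t' : ℝ} (hS : S ≠ 0) (ht : t ≠ r) (ht' : t' ≠ r) :
    (0 < S * (t - r) ↔ 0 < S * (t' - r)) ↔ (r < t ↔ r < t') := by
  rcases hS.lt_or_gt with hS | hS
  · have key : ∀ s ≠ r, (0 < S * (s - r) ↔ ¬ r < s) := fun s hs => by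
      rw [show S * (s - r) = -S * (r - s) by ring, mul_pos_iff_of_pos_left (neg_pos.mpr hS),
        sub_pos]
      exact ⟨fun h => h.asymm, fun h => (lt_or_gt_of_ne hs).resolve_right h⟩
    rw [key t ht, key t' ht', not_iff_not]
  · simp only [mul_pos_iff_of_pos_left hS, sub_pos]

lemma dist_sq_sub_dist_sq_add_smul {E : Type*} [NormedAddCommGroup E] [InnerProductSpace ℝ E]
    (c d a b : E) (t : ℝ) :
    dist (c + t • d) b ^ 2 - dist (c + t • d) a ^ 2
      = dist c b ^ 2 - dist c a ^ 2 + t * (2 * ⟪d, a - b⟫) := by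
  simp only [dist_eq_norm, add_sub_right_comm c, norm_add_sq_real, inner_smul_right,
    inner_sub_right, real_inner_comm d]
  ring

lemma Nat.choose_two_mul_choose_two_sub_one_add_one (n : ℕ) :
    n.choose 2 * ((n - 1).choose 2 + 1) = n.choose 2 ^ 2 - 3 * n.choose 3 := by
  rcases n with _ | _ | m
  · simp
  · simp
  · have h2 : (m + 1 + 1).choose 2 = (m + 1).choose 2 + (m + 1) := by
      rw [Nat.choose_succ_succ', Nat.choose_one_right, add_comm]
    have h3 : (m + 1 + 1).choose 3 * 3 = (m + 1 + 1).choose 2 * m :=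
      Nat.choose_succ_right_eq (m + 2) 2
    rw [Nat.add_sub_cancel]
    refine Nat.eq_sub_of_add_eq ?_
    rw [mul_comm 3, h3, sq, ← mul_add]
    congr 1
    omega

lemma Tie.symm {n : ℕ} {p : Fin n → Pt} {x : Pt} {i j : Fin n} (h : Tie p x i j) :
    Tie p x j i :=
  ⟨h.1.symm, h.2.symm⟩

namespace OACD

variable {n : ℕ} {p : Fin n → Pt}

def rot (w : Pt) : Pt := !₂[-w 1, w 0]

lemma inner_rot_self (w : Pt) : ⟪rot w, w⟫ = 0 := by
  simp [rot, PiLp.inner_apply, Fin.sum_univ_two]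
  ring

lemma rot_eq_zero_iff {w : Pt} : rot w = 0 ↔ w = 0 := by
  constructor <;> intro h <;> ext k
  · have h0 := congrArg (· 0) h
    have h1 := congrArg (· 1) h
    fin_cases k <;> simp_all [rot]
  · fin_cases k <;> simp [rot, h]

lemma exists_eq_smul_rot_of_inner_eq_zero {w y : Pt} (hw : w ≠ 0) (hy : ⟪y, w⟫ = 0) :
    ∃ t : ℝ, y = t • rot w := by
  have hw' : w 0 ^ 2 + w 1 ^ 2 ≠ 0 := by
    contrapose! hw
    ext k
    fin_cases k <;> simp <;> nlinarith [sq_nonneg (w 0), sq_nonneg (w 1)]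
  simp only [PiLp.inner_apply, Fin.sum_univ_two, RCLike.inner_apply, conj_trivial] at hy
  refine ⟨(y 1 * w 0 - y 0 * w 1) / (w 0 ^ 2 + w 1 ^ 2), ?_⟩
  ext k
  fin_cases k <;> simp [rot] <;> field_simp
  · linear_combination w 0 * hy
  · linear_combination w 1 * hy

section Code

variable (p)

lemma code_lt_code_of_dist_lt {x : Pt} {k m : Fin n} (h : dist x (p k) < dist x (p m)) :
    code p x m < code p x k := by
  set A : Fin n → Set (Fin n) := fun i => {j | j ≠ i ∧ dist x (p i) < dist x (p j)}
  set T : Fin n → Set (Fin n) := fun i => {j | j ≠ i ∧ dist x (p j) = dist x (p i)}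
  -- `m` and everything at least as far as `p m` is strictly farther than `p k`
  have hcard : (A m).ncard + (T m).ncard + 1 ≤ (A k).ncard := by
    have hdisj : Disjoint (A m) (T m) :=
      Set.disjoint_left.mpr fun l hA hT => hA.2.ne' hT.2
    have hm : m ∉ A m ∪ T m := by rintro (hl | hl) <;> exact hl.1 rfl
    rw [← Set.ncard_union_eq hdisj, ← Set.ncard_insert_of_notMem hm]
    refine Set.ncard_le_ncard ?_
    rintro l (rfl | ⟨-, hl⟩ | ⟨-, hl⟩)
    · exact ⟨fun h' => h.ne (by rw [h']), h⟩
    · exact ⟨fun h' => (h.trans hl).ne (by rw [h']), h.trans hl⟩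
    · exact ⟨fun h' => h.ne (by rw [← hl, h']), hl ▸ h⟩
  have hcard' : ((A m).ncard : ℚ) + (T m).ncard + 1 ≤ (A k).ncard := by exact_mod_cast hcard
  have hT : (0 : ℚ) ≤ (T k).ncard := Nat.cast_nonneg _
  simp only [code]
  linarith

lemma code_eq_code_of_dist_eq {x : Pt} {u v : Fin n} (h : dist x (p u) = dist x (p v)) :
    code p x u = code p x v := by
  have hfar : ∀ i, dist x (p i) = dist x (p v) →
      {j | j ≠ i ∧ dist x (p i) < dist x (p j)} = {j | dist x (p v) < dist x (p j)} := by
    intro i hi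
    ext j
    simp only [Set.mem_ofPred_eq, hi]
    exact ⟨And.right, fun hj => ⟨fun hji => hj.ne' (hji ▸ hi), hj⟩⟩
  have htied : ∀ i, dist x (p i) = dist x (p v) →
      {j | j ≠ i ∧ dist x (p j) = dist x (p i)} = {j | dist x (p j) = dist x (p v)} \ {i} := by
    intro i hi
    ext j
    simp only [Set.mem_ofPred_eq, Set.mem_sdiff, Set.mem_singleton_iff, hi]
    exact and_comm
  simp only [code, hfar u h, hfar v rfl, htied u h, htied v rfl,
    Set.ncard_sdiff_singleton_of_mem (show u ∈ {j | dist x (p j) = dist x (p v)} from h),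
    Set.ncard_sdiff_singleton_of_mem (show v ∈ {j | dist x (p j) = dist x (p v)} from rfl)]

lemma dist_eq_dist_iff_code_eq_code {x : Pt} {u v : Fin n} :
    dist x (p u) = dist x (p v) ↔ code p x u = code p x v := by
  refine ⟨code_eq_code_of_dist_eq p, fun h => ?_⟩
  rcases lt_trichotomy (dist x (p u)) (dist x (p v)) with huv | huv | huv
  · exact absurd h (code_lt_code_of_dist_lt p huv).ne'
  · exact huv
  · exact absurd h (code_lt_code_of_dist_lt p huv).ne

lemma dist_lt_dist_iff_code_lt_code {x : Pt} {k m : Fin n} :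
    dist x (p k) < dist x (p m) ↔ code p x m < code p x k := by
  refine ⟨code_lt_code_of_dist_lt p, fun h => ?_⟩
  by_contra hkm
  rcases (not_lt.mp hkm).lt_or_eq with hmk | hmk
  · exact (code_lt_code_of_dist_lt p hmk).asymm h
  · exact h.ne (code_eq_code_of_dist_eq p hmk)

lemma code_eq_code_iff {x y : Pt} :
    code p x = code p y ↔
      ∀ k m, (dist x (p k) < dist x (p m) ↔ dist y (p k) < dist y (p m)) := by
  refine ⟨fun h k m => by simp only [dist_lt_dist_iff_code_lt_code, h], fun h => ?_⟩
  funext i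
  simp only [code, le_antisymm_iff, ← not_lt, h]

lemma tie_iff_tie_of_code_eq {x y : Pt} (h : code p x = code p y) {u v : Fin n} :
    Tie p x u v ↔ Tie p y u v := by
  simp only [Tie, dist_eq_dist_iff_code_eq_code, h]

end Code

variable (p) in
def bisectorPoint (i j : Fin n) (t : ℝ) : Pt := midpoint ℝ (p i) (p j) + t • rot (p j - p i)

variable (p) in
def slope (i j k m : Fin n) : ℝ := 2 * ⟪rot (p j - p i), p k - p m⟫

variable (p) in
/-- The parameter at which the bisector of `p k, p m` crosses that of `p i, p j`. -/
def crossing (i j k m : Fin n) : ℝ :=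
  (dist (midpoint ℝ (p i) (p j)) (p k) ^ 2 - dist (midpoint ℝ (p i) (p j)) (p m) ^ 2) /
    slope p i j k m

lemma crossing_comm (i j k m : Fin n) : crossing p i j k m = crossing p i j m k := by
  have : slope p i j m k = -slope p i j k m := by
    rw [slope, slope, ← neg_sub (p k) (p m), inner_neg_right]; ring
  rw [crossing, crossing, this, div_neg, ← neg_div, neg_sub]

lemma dist_sq_sub_dist_sq_bisectorPoint (i j k m : Fin n) (t : ℝ) :
    dist (bisectorPoint p i j t) (p m) ^ 2 - dist (bisectorPoint p i j t) (p k) ^ 2 =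
      dist (midpoint ℝ (p i) (p j)) (p m) ^ 2 - dist (midpoint ℝ (p i) (p j)) (p k) ^ 2
        + t * slope p i j k m :=
  dist_sq_sub_dist_sq_add_smul _ _ _ _ t

lemma dist_bisectorPoint_eq (i j : Fin n) (t : ℝ) :
    dist (bisectorPoint p i j t) (p i) = dist (bisectorPoint p i j t) (p j) := by
  have hslope : slope p i j i j = 0 := by
    rw [slope, ← neg_sub (p j) (p i), inner_neg_right, inner_rot_self]; ring
  have h := dist_sq_sub_dist_sq_bisectorPoint (p := p) i j i j t
  rw [hslope, dist_midpoint_left, dist_midpoint_right] at h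
  exact ((sq_eq_sq₀ dist_nonneg dist_nonneg).mp (by linarith)).symm

lemma bisectorPoint_injective {i j : Fin n} (hpij : p i ≠ p j) :
    Function.Injective (bisectorPoint p i j) := by
  intro t t' h
  have hrot : rot (p j - p i) ≠ 0 := by
    rw [Ne, rot_eq_zero_iff, sub_eq_zero]; exact hpij.symm
  simpa [bisectorPoint, hrot] using h

lemma exists_bisectorPoint_eq {i j : Fin n} (hpij : p i ≠ p j) {x : Pt}
    (hx : dist x (p i) = dist x (p j)) : ∃ t, bisectorPoint p i j t = x := by
  have h := dist_sq_sub_dist_sq_add_smul (midpoint ℝ (p i) (p j)) (x - midpoint ℝ (p i) (p j))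
    (p i) (p j) 1
  rw [one_smul, add_sub_cancel, hx, dist_midpoint_left, dist_midpoint_right] at h
  have hperp : ⟪x - midpoint ℝ (p i) (p j), p j - p i⟫ = 0 := by
    rw [← neg_sub (p i) (p j), inner_neg_right]; linarith
  obtain ⟨t, ht⟩ := exists_eq_smul_rot_of_inner_eq_zero (sub_ne_zero.mpr hpij.symm) hperp
  exact ⟨t, by rw [bisectorPoint, ← ht, add_sub_cancel]⟩

lemma sym2_eq_of_tie_of_tie
    (hclass : ∀ x, CellPoint p x ∨ EdgePoint p x ∨ Vertex2I p x ∨ Vertex3I p x)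
    {x : Pt} {i j k m k' m' : Fin n} (hij : Tie p x i j) (hkm : Tie p x k m)
    (hkm' : Tie p x k' m') (hk : k ≠ j) (hm : m ≠ j) (hk' : k' ≠ j) (hm' : m' ≠ j) :
    s(k, m) = s(k', m') := by
  rw [Sym2.eq_iff]
  rcases hclass x with hcell | ⟨a, b, -, hab⟩ | ⟨a, b, u, v, -, -, -, -, -, -, -, -, huv⟩ |
      ⟨a, b, c, -, -, -, habc⟩
  · exact absurd hij (hcell i j)
  · have h1 := hab i j hij
    have h2 := hab k m hkm
    simp only [Set.pair_eq_pair_iff] at h1 h2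
    grind
  · have h1 := huv i j hij
    have h2 := huv k m hkm
    have h3 := huv k' m' hkm'
    simp only [Set.pair_eq_pair_iff] at h1 h2 h3
    grind
  · have h1 := (habc i j).1 hij
    have h2 := (habc k m).1 hkm
    have h3 := (habc k' m').1 hkm'
    simp only [Set.mem_insert_iff, Set.mem_singleton_iff] at h1 h2 h3
    grind

lemma slope_ne_zero {i j k m : Fin n} (hpij : p i ≠ p j)
    (huniq : ∃! x : Pt, dist x (p i) = dist x (p j) ∧ dist x (p k) = dist x (p m)) :
    slope p i j k m ≠ 0 := by
  intro hslope
  obtain ⟨x, ⟨hxij, hxkm⟩, hx⟩ := huniq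
  obtain ⟨t, rfl⟩ := exists_bisectorPoint_eq hpij hxij
  have hall : ∀ s, dist (bisectorPoint p i j s) (p k) = dist (bisectorPoint p i j s) (p m) := by
    intro s
    have hs := dist_sq_sub_dist_sq_bisectorPoint (p := p) i j k m s
    have ht := dist_sq_sub_dist_sq_bisectorPoint (p := p) i j k m t
    rw [hslope, mul_zero, add_zero] at hs ht
    rw [hxkm, sub_self] at ht
    exact (sq_eq_sq₀ dist_nonneg dist_nonneg).mp (by linarith)
  have h01 : bisectorPoint p i j 0 = bisectorPoint p i j 1 :=
    (hx _ ⟨dist_bisectorPoint_eq i j 0, hall 0⟩).trans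
      (hx _ ⟨dist_bisectorPoint_eq i j 1, hall 1⟩).symm
  exact zero_ne_one (bisectorPoint_injective hpij h01)

lemma slope_ne_zero_of_generalPosition (hgp : GeneralPosition p) {i j k m : Fin n}
    (hpij : p i ≠ p j) (hkm : k ≠ m) (hne : s(k, m) ≠ s(i, j)) : slope p i j k m ≠ 0 :=
  slope_ne_zero hpij <| hgp.2 i j k m (ne_of_apply_ne p hpij) hkm
    fun h => hne (Set.pair_eq_pair_iff_sym2_eq.mp h).symm

lemma dist_sq_sub_dist_sq_bisectorPoint_eq_mul {i j k m : Fin n} (hslope : slope p i j k m ≠ 0)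
    (t : ℝ) :
    dist (bisectorPoint p i j t) (p m) ^ 2 - dist (bisectorPoint p i j t) (p k) ^ 2 =
      slope p i j k m * (t - crossing p i j k m) := by
  rw [dist_sq_sub_dist_sq_bisectorPoint, crossing]
  field_simp
  ring

lemma dist_bisectorPoint_lt_iff {i j k m : Fin n} (hslope : slope p i j k m ≠ 0) (t : ℝ) :
    dist (bisectorPoint p i j t) (p k) < dist (bisectorPoint p i j t) (p m) ↔
      0 < slope p i j k m * (t - crossing p i j k m) := by
  rw [← dist_sq_sub_dist_sq_bisectorPoint_eq_mul hslope t, sub_pos,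
    sq_lt_sq₀ dist_nonneg dist_nonneg]

lemma dist_bisectorPoint_eq_iff {i j k m : Fin n} (hslope : slope p i j k m ≠ 0) (t : ℝ) :
    dist (bisectorPoint p i j t) (p k) = dist (bisectorPoint p i j t) (p m) ↔
      t = crossing p i j k m := by
  rw [← sq_eq_sq₀ dist_nonneg dist_nonneg, eq_comm, ← sub_eq_zero,
    dist_sq_sub_dist_sq_bisectorPoint_eq_mul hslope t, mul_eq_zero, sub_eq_zero,
    or_iff_right hslope]

variable (p) in
/-- Pairs through `j` are left out: the bisectors of `{j, k}` and `{i, k}` cross that of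
`{i, j}` at the same point. -/
def crossings (i j : Fin n) : Finset ℝ :=
  (univ.erase j).offDiag.image fun q => crossing p i j q.1 q.2

lemma exists_tie_ne_of_tie_of_tie {x : Pt} {i j u v : Fin n} (hij : Tie p x i j)
    (huv : Tie p x u v) (hne : s(u, v) ≠ s(i, j)) :
    ∃ k m, k ≠ j ∧ m ≠ j ∧ Tie p x k m := by
  unfold Tie at *
  rw [Ne, Sym2.eq_iff] at hne
  by_cases hu : u = j
  · exact ⟨i, v, hij.1, by grind, by grind⟩
  by_cases hv : v = j
  · exact ⟨i, u, hij.1, hu, by grind⟩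
  · exact ⟨u, v, hu, hv, huv⟩

lemma sym2_ne_of_ne_of_ne {k m i j : Fin n} (hk : k ≠ j) (hm : m ≠ j) :
    s(k, m) ≠ s(i, j) := by
  rw [Ne, Sym2.eq_iff]; tauto

lemma mem_crossings_iff (hgp : GeneralPosition p) {i j : Fin n} (hpij : p i ≠ p j) {t : ℝ} :
    t ∈ crossings p i j ↔
      ∃ k m, k ≠ j ∧ m ≠ j ∧ Tie p (bisectorPoint p i j t) k m := by
  simp only [crossings, mem_image, mem_offDiag, mem_erase, Prod.exists]
  constructor
  · rintro ⟨k, m, ⟨⟨hk, -⟩, ⟨hm, -⟩, hkm⟩, rfl⟩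
    have hslope := slope_ne_zero_of_generalPosition hgp hpij hkm (sym2_ne_of_ne_of_ne hk hm)
    exact ⟨k, m, hk, hm, hkm, (dist_bisectorPoint_eq_iff hslope _).mpr rfl⟩
  · rintro ⟨k, m, hk, hm, hkm, hd⟩
    have hslope := slope_ne_zero_of_generalPosition hgp hpij hkm (sym2_ne_of_ne_of_ne hk hm)
    exact ⟨k, m, ⟨⟨hk, mem_univ k⟩, ⟨hm, mem_univ m⟩, hkm⟩,
      ((dist_bisectorPoint_eq_iff hslope t).mp hd).symm⟩

lemma crossing_mem_crossings (hgp : GeneralPosition p) {i j k m : Fin n} (hpij : p i ≠ p j)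
    (hkm : k ≠ m) (hne : s(k, m) ≠ s(i, j)) : crossing p i j k m ∈ crossings p i j := by
  have hslope := slope_ne_zero_of_generalPosition hgp hpij hkm hne
  rw [mem_crossings_iff hgp hpij]
  exact exists_tie_ne_of_tie_of_tie ⟨ne_of_apply_ne p hpij, dist_bisectorPoint_eq i j _⟩
    ⟨hkm, (dist_bisectorPoint_eq_iff hslope _).mpr rfl⟩ hne

lemma card_crossings (hgp : GeneralPosition p) {i j : Fin n} (hpij : p i ≠ p j) :
    #(crossings p i j) = (n - 1).choose 2 := by
  have hV : crossings p i j = ((univ.erase j).offDiag.image Sym2.mk.uncurry).image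
      (Sym2.lift ⟨crossing p i j, crossing_comm i j⟩) := by
    rw [image_image]; rfl
  have hinj : Set.InjOn (Sym2.lift ⟨crossing p i j, crossing_comm i j⟩)
      ((univ.erase j).offDiag.image Sym2.mk.uncurry : Finset _) := by
    simp only [coe_image, Set.InjOn, Set.mem_image, mem_coe, mem_offDiag,
      mem_erase, Prod.exists, forall_exists_index, and_imp]
    rintro _ k m hk - hm - hkm rfl _ k' m' hk' - hm' - hkm' rfl h
    simp only [Function.uncurry_apply_pair, Sym2.lift_mk] at h ⊢
    have hslope := slope_ne_zero_of_generalPosition hgp hpij hkm (sym2_ne_of_ne_of_ne hk hm)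
    have hslope' := slope_ne_zero_of_generalPosition hgp hpij hkm' (sym2_ne_of_ne_of_ne hk' hm')
    exact sym2_eq_of_tie_of_tie hgp.1 (x := bisectorPoint p i j (crossing p i j k m))
      ⟨ne_of_apply_ne p hpij, dist_bisectorPoint_eq i j _⟩
      ⟨hkm, (dist_bisectorPoint_eq_iff hslope _).mpr rfl⟩
      ⟨hkm', (dist_bisectorPoint_eq_iff hslope' _).mpr h⟩ hk hm hk' hm'
  rw [hV, card_image_of_injOn hinj, Sym2.card_image_offDiag,
    card_erase_of_mem (mem_univ j), card_univ, Fintype.card_fin]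

variable (p) in
def UniqueTie (x : Pt) (z : Sym2 (Fin n)) : Prop := ∀ u v, Tie p x u v ↔ s(u, v) = z

lemma edgePoint_iff_exists_uniqueTie {x : Pt} : EdgePoint p x ↔ ∃ z, UniqueTie p x z := by
  constructor
  · rintro ⟨i, j, hij, hall⟩
    refine ⟨s(i, j), fun u v =>
      ⟨fun huv => Set.pair_eq_pair_iff_sym2_eq.mp (hall u v huv), fun h => ?_⟩⟩
    rcases Sym2.eq_iff.mp h with ⟨rfl, rfl⟩ | ⟨rfl, rfl⟩
    exacts [hij, hij.symm]
  · rintro ⟨z, hz⟩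
    induction z using Sym2.ind with | _ i j
    exact ⟨i, j, (hz i j).mpr rfl,
      fun u v huv => Set.pair_eq_pair_iff_sym2_eq.mpr ((hz u v).mp huv)⟩

lemma uniqueTie_bisectorPoint_iff (hgp : GeneralPosition p) {i j : Fin n} (hpij : p i ≠ p j)
    {t : ℝ} : UniqueTie p (bisectorPoint p i j t) s(i, j) ↔ t ∉ crossings p i j := by
  rw [mem_crossings_iff hgp hpij]
  constructor
  · rintro h ⟨k, m, hk, hm, hkm⟩
    exact sym2_ne_of_ne_of_ne hk hm ((h k m).mp hkm)
  · intro h u v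
    refine ⟨fun huv => ?_, fun huv => ?_⟩
    · by_contra hne
      exact h (exists_tie_ne_of_tie_of_tie
        ⟨ne_of_apply_ne p hpij, dist_bisectorPoint_eq i j t⟩ huv hne)
    · rcases Sym2.eq_iff.mp huv with ⟨rfl, rfl⟩ | ⟨rfl, rfl⟩
      · exact ⟨ne_of_apply_ne p hpij, dist_bisectorPoint_eq u v t⟩
      · exact ⟨(ne_of_apply_ne p hpij).symm, (dist_bisectorPoint_eq v u t).symm⟩

lemma setOf_uniqueTie_eq_image (hgp : GeneralPosition p) {i j : Fin n} (hpij : p i ≠ p j) :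
    {x | UniqueTie p x s(i, j)} = bisectorPoint p i j '' (↑(crossings p i j))ᶜ := by
  ext x
  constructor
  · intro hx
    obtain ⟨t, rfl⟩ := exists_bisectorPoint_eq hpij ((hx i j).mpr rfl).2
    exact ⟨t, (uniqueTie_bisectorPoint_iff hgp hpij).mp hx, rfl⟩
  · rintro ⟨t, ht, rfl⟩
    exact (uniqueTie_bisectorPoint_iff hgp hpij).mpr ht

lemma code_bisectorPoint_eq_iff (hgp : GeneralPosition p) {i j : Fin n} (hpij : p i ≠ p j)
    {t t' : ℝ} (ht : t ∉ crossings p i j) (ht' : t' ∉ crossings p i j) :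
    code p (bisectorPoint p i j t) = code p (bisectorPoint p i j t') ↔
      countBelow (crossings p i j) t = countBelow (crossings p i j) t' := by
  rw [code_eq_code_iff, countBelow_eq_countBelow_iff]
  constructor
  · intro h v hv
    obtain ⟨⟨k, m⟩, hkm, rfl⟩ := mem_image.mp hv
    obtain ⟨⟨hk, -⟩, ⟨hm, -⟩, hkm⟩ := by simpa only [mem_offDiag, mem_erase] using hkm
    have hslope := slope_ne_zero_of_generalPosition hgp hpij hkm (sym2_ne_of_ne_of_ne hk hm)
    rw [← pos_mul_sub_iff_pos_mul_sub hslope (ne_of_mem_of_not_mem hv ht).symm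
      (ne_of_mem_of_not_mem hv ht').symm, ← dist_bisectorPoint_lt_iff hslope,
      ← dist_bisectorPoint_lt_iff hslope]
    exact h k m
  · intro h k m
    by_cases hkm : k = m
    · simp only [hkm, lt_self_iff_false]
    by_cases hz : s(k, m) = s(i, j)
    · rcases Sym2.eq_iff.mp hz with ⟨rfl, rfl⟩ | ⟨rfl, rfl⟩ <;>
        rw [dist_bisectorPoint_eq, dist_bisectorPoint_eq, lt_self_iff_false, lt_self_iff_false]
    have hslope := slope_ne_zero_of_generalPosition hgp hpij hkm hz
    have hr := crossing_mem_crossings hgp hpij hkm hz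
    rw [dist_bisectorPoint_lt_iff hslope, dist_bisectorPoint_lt_iff hslope,
      pos_mul_sub_iff_pos_mul_sub hslope (ne_of_mem_of_not_mem hr ht).symm
        (ne_of_mem_of_not_mem hr ht').symm]
    exact h _ hr

lemma ncard_code_image_uniqueTie (hgp : GeneralPosition p) {i j : Fin n} (hpij : p i ≠ p j) :
    (code p '' {x | UniqueTie p x s(i, j)}).ncard = (n - 1).choose 2 + 1 := by
  rw [setOf_uniqueTie_eq_image hgp hpij, Set.image_image,
    Set.ncard_image_eq_ncard_image_of_fibers (s := (↑(crossings p i j))ᶜ)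
      (g := countBelow (crossings p i j))
      fun t ht t' ht' => code_bisectorPoint_eq_iff hgp hpij ht ht',
    image_countBelow_compl, ← coe_Iic, Set.ncard_coe_finset, Nat.card_Iic,
    card_crossings hgp hpij]

variable (p) in
lemma pairwiseDisjoint_code_image_uniqueTie :
    Set.univ.PairwiseDisjoint fun z : Sym2 (Fin n) => code p '' {x | UniqueTie p x z} := by
  intro z _ z' _ hne
  rw [Function.onFun, Set.disjoint_left]
  rintro _ ⟨x, hx, rfl⟩ ⟨y, hy, hxy⟩
  induction z using Sym2.ind with | _ a b
  exact hne ((hy a b).mp ((tie_iff_tie_of_code_eq p hxy).mpr ((hx a b).mpr rfl)))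

variable (p) in
lemma setOf_edgePoint_code_eq_biUnion :
    {c | ∃ x, EdgePoint p x ∧ code p x = c} =
      ⋃ z ∈ (↑(univ.offDiag.image Sym2.mk.uncurry : Finset (Sym2 (Fin n))) : Set _),
        code p '' {x | UniqueTie p x z} := by
  ext c
  simp only [Set.mem_ofPred_eq, Set.mem_iUnion, exists_prop, edgePoint_iff_exists_uniqueTie]
  constructor
  · rintro ⟨x, ⟨z, hz⟩, rfl⟩
    refine ⟨z, ?_, x, hz, rfl⟩
    induction z using Sym2.ind with | _ a b
    exact mem_coe.mpr <| mem_image.mpr ⟨(a, b), by simpa using ((hz a b).mpr rfl).1, rfl⟩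
  · rintro ⟨z, -, x, hz, rfl⟩
    exact ⟨x, ⟨z, hz⟩, rfl⟩

end OACD

open OACD

theorem edge_count_general {n : ℕ} (p : Fin n → Pt)
    (hp : Function.Injective p) (hgp : GeneralPosition p) :
    Set.ncard {c : Fin n → ℚ | ∃ x : Pt, EdgePoint p x ∧ code p x = c}
      = (n.choose 2) ^ 2 - 3 * n.choose 3 := by
  set pairs : Finset (Sym2 (Fin n)) := univ.offDiag.image Sym2.mk.uncurry
  have hblock :
      ∀ z ∈ pairs, (code p '' {x | UniqueTie p x z}).ncard = (n - 1).choose 2 + 1 := by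
    intro z hz
    obtain ⟨⟨i, j⟩, hij, rfl⟩ := mem_image.mp hz
    exact ncard_code_image_uniqueTie hgp (hp.ne (mem_offDiag.mp hij).2.2)
  rw [setOf_edgePoint_code_eq_biUnion, Set.Finite.ncard_biUnion pairs.finite_toSet
      (fun z hz => Set.finite_of_ncard_pos (by rw [hblock z hz]; omega))
      ((pairwiseDisjoint_code_image_uniqueTie p).subset (Set.subset_univ _)),
    finsum_mem_coe_finset, sum_congr rfl hblock, sum_const, smul_eq_mul,
    Sym2.card_image_offDiag, card_univ, Fintype.card_fin,
    Nat.choose_two_mul_choose_two_sub_one_add_one]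

/-- in general position, the number of distinct chromatic codes attained by
edge points equals `C(n,2)² − 3·C(n,3)` (the number of edges of the full-OACD). -/
theorem edge_count {n : ℕ} (hn : 2 ≤ n) (p : Fin n → Pt)
    (hp : Function.Injective p) (hgp : GeneralPosition p) :
    Set.ncard {c : Fin n → ℚ | ∃ x : Pt, EdgePoint p x ∧ code p x = c}
      = (n.choose 2) ^ 2 - 3 * n.choose 3 :=
  edge_count_general p hp hgp
end
end

section
/- The code of an edge is the average of the codes of the two cells on its two sides: let x be an edge point with tie {i,j}, and define c₊, c₋ : {1,…,n} → ℚ by c₊ = code(x) except c₊_i = code(x)_i + 1/2 and c₊_j = code(x)_j − 1/2, and c₋ = code(x) except c₋_i = code(x)_i − 1/2 and c₋_j = code(x)_j + 1/2. Then there exists ε₀ > 0 such that for every 0 < ε ≤ ε₀ the set of chromatic codes of cell points in the open ball B(x,ε) is exactly {c₊, c₋}; in particular code(x) = (1/2)(c₊ + c₋). -/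
noncomputable section

open Metric

/-- The code of the cell on one side of the edge through `x` with tie `{i,j}`:
it agrees with `code p x` except that the value at `i` is raised by `1/2` and the value
at `j` is lowered by `1/2`. -/
def cplus {n : ℕ} (p : Fin n → Pt) (x : Pt) (i j : Fin n) : Fin n → ℚ :=
  Function.update (Function.update (code p x) i (code p x i + 1/2)) j (code p x j - 1/2)

/-- The code of the cell on the other side of the edge through `x` with tie `{i,j}`. -/
def cminus {n : ℕ} (p : Fin n → Pt) (x : Pt) (i j : Fin n) : Fin n → ℚ :=
  Function.update (Function.update (code p x) i (code p x i - 1/2)) j (code p x j + 1/2)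

/-! Strict comparisons between the distances from `x` to the generators persist on a small ball
around `x`, so there the only comparison that can change is the tie between `p i` and `p j`.
Writing each code entry as a sum of pairwise scores (`1`, `1/2` or `0`), breaking that tie one way
or the other moves exactly the `(i, j)` and `(j, i)` scores by `±1/2`. Both ways are realised
arbitrarily close to `x` by moving along `p j - p i`. -/

open Topology

lemma eventually_forall_lt_imp_lt {X α ι : Type*} [TopologicalSpace X] [LinearOrder α]
    [TopologicalSpace α] [OrderClosedTopology α] [Finite ι] {f : ι → X → α} {x : X}
    (hf : ∀ u, ContinuousAt (f u) x) :
    ∀ᶠ y in 𝓝 x, ∀ u v, f u x < f v x → f u y < f v y := by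
  simp only [Filter.eventually_all]
  exact fun u v h => (hf u).eventually_lt (hf v) h

lemma norm_add_smul_sub_sq_sub {E : Type*} [NormedAddCommGroup E] [InnerProductSpace ℝ E]
    {x a b : E} (hd : ‖x - a‖ = ‖x - b‖) (t : ℝ) :
    ‖x + t • (b - a) - a‖ ^ 2 - ‖x + t • (b - a) - b‖ ^ 2 = 2 * t * ‖b - a‖ ^ 2 := by
  have hinner : inner ℝ (x - a) (b - a) - inner ℝ (x - b) (b - a) = ‖b - a‖ ^ 2 := by
    rw [← inner_sub_left, sub_sub_sub_cancel_left, real_inner_self_eq_norm_sq]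
  rw [add_sub_right_comm, add_sub_right_comm x, norm_add_sq_real, norm_add_sq_real, hd,
    real_inner_smul_right, real_inner_smul_right, norm_smul, mul_pow]
  linear_combination 2 * t * hinner

lemma exists_mem_ball_dist_lt_of_dist_eq {E : Type*} [NormedAddCommGroup E]
    [InnerProductSpace ℝ E] {x a b : E} (hab : a ≠ b) (hd : dist x a = dist x b)
    {ε : ℝ} (hε : 0 < ε) : ∃ y ∈ ball x ε, dist y b < dist y a := by
  have hba : 0 < ‖b - a‖ := norm_pos_iff.2 (sub_ne_zero.2 hab.symm)
  set t := ε / (2 * ‖b - a‖)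
  have ht : 0 < t := by positivity
  refine ⟨x + t • (b - a), ?_, ?_⟩
  · have : t * ‖b - a‖ = ε / 2 := by rw [div_mul_eq_mul_div, mul_div_mul_right _ _ hba.ne']
    rw [mem_ball, dist_eq_norm, add_sub_cancel_left, norm_smul, Real.norm_of_nonneg ht.le, this]
    linarith
  · rw [dist_eq_norm, dist_eq_norm] at hd ⊢
    have := norm_add_smul_sub_sq_sub hd t
    refine lt_of_pow_lt_pow_left₀ 2 (norm_nonneg _) ?_
    nlinarith [mul_pos ht (pow_pos hba 2)]

def score (a b : ℝ) : ℚ := if a < b then 1 else if a = b then 1/2 else 0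

lemma code_eq_sum_score {n : ℕ} (p : Fin n → Pt) (x : Pt) (k : Fin n) :
    code p x k = ∑ l, score (dist x (p k)) (dist x (p l)) - 1/2 := by
  have hsplit : ∀ l, score (dist x (p k)) (dist x (p l)) =
      ((if l ≠ k ∧ dist x (p k) < dist x (p l) then 1 else 0)
        + 1/2 * (if l ≠ k ∧ dist x (p l) = dist x (p k) then 1 else 0))
        + (if k = l then 1/2 else 0) := by
    intro l
    by_cases hlk : l = k
    · subst hlk; simp [score]
    · rcases lt_trichotomy (dist x (p k)) (dist x (p l)) with h | h | h
      · simp [score, h, hlk, Ne.symm hlk, h.ne']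
      · simp [score, h, hlk, Ne.symm hlk]
      · simp [score, hlk, Ne.symm hlk, h.not_gt, h.ne, h.ne']
  simp only [hsplit, Finset.sum_add_distrib, ← Finset.mul_sum, Finset.sum_ite_eq, Finset.mem_univ,
    if_true, ← Finset.natCast_card_filter, code, Set.ncard_eq_toFinset_card', Set.toFinset_ofPred]
  ring

lemma cplus_apply {n : ℕ} (p : Fin n → Pt) (x : Pt) {i j : Fin n} (hij : i ≠ j) (k : Fin n) :
    cplus p x i j k = code p x k + ((if k = i then 1/2 else 0) - (if k = j then 1/2 else 0)) := by
  by_cases hkj : k = j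
  · subst hkj; simp [cplus, Ne.symm hij, sub_eq_add_neg]
  · by_cases hki : k = i
    · subst hki; simp [cplus, hkj]
    · simp [cplus, hki, hkj]

lemma cminus_eq_cplus {n : ℕ} (p : Fin n → Pt) (x : Pt) {i j : Fin n} (hij : i ≠ j) :
    cminus p x i j = cplus p x j i := by
  rw [cplus, cminus, Function.update_comm hij]

lemma code_eq_cplus_add_cminus_div_two {n : ℕ} (p : Fin n → Pt) (x : Pt) {i j : Fin n}
    (hij : i ≠ j) (k : Fin n) : code p x k = (cplus p x i j k + cminus p x i j k) / 2 := by
  rw [cminus_eq_cplus p x hij, cplus_apply p x hij, cplus_apply p x hij.symm]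
  ring

section EdgeNeighbourhood

variable {n : ℕ} {p : Fin n → Pt} {x y : Pt} {i j : Fin n}

lemma score_dist_eq_of_near_edge (hd : dist x (p i) = dist x (p j))
    (huniq : ∀ u v, Tie p x u v → ({u, v} : Set (Fin n)) = {i, j})
    (hxy : ∀ u v, dist x (p u) < dist x (p v) → dist y (p u) < dist y (p v))
    (hlt : dist y (p i) < dist y (p j)) (k l : Fin n) :
    score (dist y (p k)) (dist y (p l)) = score (dist x (p k)) (dist x (p l))
      + ((if k = i ∧ l = j then 1/2 else 0) - (if k = j ∧ l = i then 1/2 else 0)) := by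
  have hij : i ≠ j := by rintro rfl; exact hlt.false
  by_cases hkl : k = l
  · subst hkl; by_cases hki : k = i <;> simp [score, hki, hij]
  have hoff (hne : dist x (p k) ≠ dist x (p l)) : ¬(k = i ∧ l = j) ∧ ¬(k = j ∧ l = i) := by
    constructor <;> rintro ⟨rfl, rfl⟩
    exacts [hne hd, hne hd.symm]
  rcases lt_trichotomy (dist x (p k)) (dist x (p l)) with h | h | h
  · simp [score, h, hxy k l h, hoff h.ne]
  · rcases Set.pair_eq_pair_iff.1 (huniq k l ⟨hkl, h⟩) with ⟨rfl, rfl⟩ | ⟨rfl, rfl⟩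
    · norm_num [score, hlt, hd, hij]
    · simp [score, hlt.not_gt, hlt.ne', hd, hij]
  · simp [score, h.not_gt, h.ne', (hxy l k h).not_gt, (hxy l k h).ne', hoff h.ne']

lemma code_eq_cplus_of_near_edge (hd : dist x (p i) = dist x (p j))
    (huniq : ∀ u v, Tie p x u v → ({u, v} : Set (Fin n)) = {i, j})
    (hxy : ∀ u v, dist x (p u) < dist x (p v) → dist y (p u) < dist y (p v))
    (hlt : dist y (p i) < dist y (p j)) :
    code p y = cplus p x i j := by
  have hij : i ≠ j := by rintro rfl; exact hlt.false
  funext k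
  simp only [cplus_apply p x hij, code_eq_sum_score, score_dist_eq_of_near_edge hd huniq hxy hlt,
    Finset.sum_add_distrib, Finset.sum_sub_distrib, ite_and, Finset.sum_ite_irrel,
    Finset.sum_ite_eq', Finset.mem_univ, if_true, Finset.sum_const_zero]
  ring

lemma code_eq_cminus_of_near_edge (hd : dist x (p i) = dist x (p j))
    (huniq : ∀ u v, Tie p x u v → ({u, v} : Set (Fin n)) = {i, j})
    (hxy : ∀ u v, dist x (p u) < dist x (p v) → dist y (p u) < dist y (p v))
    (hgt : dist y (p j) < dist y (p i)) :
    code p y = cminus p x i j := by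
  have huniq' : ∀ u v, Tie p x u v → ({u, v} : Set (Fin n)) = {j, i} := fun u v h => by
    rw [huniq u v h, Set.pair_comm]
  rw [cminus_eq_cplus p x (by rintro rfl; exact hgt.false)]
  exact code_eq_cplus_of_near_edge hd.symm huniq' hxy hgt

lemma cellPoint_of_near_edge
    (huniq : ∀ u v, Tie p x u v → ({u, v} : Set (Fin n)) = {i, j})
    (hxy : ∀ u v, dist x (p u) < dist x (p v) → dist y (p u) < dist y (p v))
    (hne : dist y (p i) ≠ dist y (p j)) : CellPoint p y := by
  rintro u v ⟨huv, hyuv⟩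
  rcases lt_trichotomy (dist x (p u)) (dist x (p v)) with h | h | h
  · exact (hxy u v h).ne hyuv
  · rcases Set.pair_eq_pair_iff.1 (huniq u v ⟨huv, h⟩) with ⟨rfl, rfl⟩ | ⟨rfl, rfl⟩
    exacts [hne hyuv, hne hyuv.symm]
  · exact (hxy v u h).ne' hyuv

end EdgeNeighbourhood

theorem edge_is_average_of_two_cells_general {n : ℕ} (p : Fin n → Pt)
    (hp : Function.Injective p) (x : Pt) (i j : Fin n)
    (htie : Tie p x i j)
    (huniq : ∀ u v, Tie p x u v → ({u, v} : Set (Fin n)) = {i, j}) :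
    (∃ ε₀ > (0 : ℝ), ∀ ε : ℝ, 0 < ε → ε ≤ ε₀ →
      {c : Fin n → ℚ | ∃ y ∈ Metric.ball x ε, CellPoint p y ∧ code p y = c} =
        ({cplus p x i j, cminus p x i j} : Set (Fin n → ℚ))) ∧
    (∀ t, code p x t = (cplus p x i j t + cminus p x i j t) / 2) := by
  obtain ⟨hij, hd⟩ := htie
  refine ⟨?_, code_eq_cplus_add_cminus_div_two p x hij⟩
  obtain ⟨ε₀, hε₀, hxy⟩ := Metric.eventually_nhds_iff_ball.1 <|
    eventually_forall_lt_imp_lt (f := fun u y => dist y (p u)) (x := x)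
      fun u => (continuous_id.dist continuous_const).continuousAt
  refine ⟨ε₀, hε₀, fun ε hε hεle => ?_⟩
  have hnear : ∀ y ∈ ball x ε, ∀ u v, dist x (p u) < dist x (p v) → dist y (p u) < dist y (p v) :=
    fun y hy => hxy y (ball_subset_ball hεle hy)
  refine Set.Subset.antisymm ?_ ?_
  · rintro _ ⟨y, hy, hcell, rfl⟩
    have hne : dist y (p i) ≠ dist y (p j) := fun h => hcell i j ⟨hij, h⟩
    rcases hne.lt_or_gt with h | h
    · exact Or.inl (code_eq_cplus_of_near_edge hd huniq (hnear y hy) h)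
    · exact Or.inr (code_eq_cminus_of_near_edge hd huniq (hnear y hy) h)
  · rintro _ (rfl | rfl)
    · obtain ⟨y, hy, h⟩ := exists_mem_ball_dist_lt_of_dist_eq (hp.ne hij).symm hd.symm hε
      exact ⟨y, hy, cellPoint_of_near_edge huniq (hnear y hy) h.ne,
        code_eq_cplus_of_near_edge hd huniq (hnear y hy) h⟩
    · obtain ⟨y, hy, h⟩ := exists_mem_ball_dist_lt_of_dist_eq (hp.ne hij) hd hε
      exact ⟨y, hy, cellPoint_of_near_edge huniq (hnear y hy) h.ne',
        code_eq_cminus_of_near_edge hd huniq (hnear y hy) h⟩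

/-- the code of an edge is the average of the codes of the two cells on its
two sides: for an edge point `x` with (unique) tie `{i,j}`, for all small enough balls
around `x` the chromatic codes of cell points in the ball are exactly `c₊` and `c₋`;
in particular `code x = (1/2)(c₊ + c₋)`. -/
theorem edge_is_average_of_two_cells {n : ℕ} (hn : 2 ≤ n) (p : Fin n → Pt)
    (hp : Function.Injective p) (x : Pt) (i j : Fin n)
    (htie : Tie p x i j)
    (huniq : ∀ u v, Tie p x u v → ({u, v} : Set (Fin n)) = {i, j}) :
    (∃ ε₀ > (0 : ℝ), ∀ ε : ℝ, 0 < ε → ε ≤ ε₀ →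
      {c : Fin n → ℚ | ∃ y ∈ Metric.ball x ε, CellPoint p y ∧ code p y = c} =
        ({cplus p x i j, cminus p x i j} : Set (Fin n → ℚ))) ∧
    (∀ t, code p x t = (cplus p x i j t + cminus p x i j t) / 2) :=
  edge_is_average_of_two_cells_general p hp x i j htie huniq
end
end

section
/- Structure of a 3-I unit: let x be a 3-I vertex point whose ties are exactly the three pairs of {i,j,k}, and write code(x)_i = code(x)_j = code(x)_k = z + 1 with z an integer. Then there exists ε₀ > 0 such that for every 0 < ε ≤ ε₀ the set of chromatic codes of cell points in the open ball B(x,ε) consists of exactly six functions, namely the functions c agreeing with code(x) outside {i,j,k} and assigning the three values z, z+1, z+2 bijectively to the indices i, j, k; consequently code(x) equals the average (1/6 of the sum) of these six cell codes. -/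
noncomputable section

open Metric

/-- The set of candidate cell codes around a 3-I vertex point `x` with tie triple `{i,j,k}`
and common code value `z + 1`: functions agreeing with `code p x` outside `{i,j,k}` and
assigning the values `z, z+1, z+2` bijectively to `i, j, k`. -/
def cellCodes3I {n : ℕ} (p : Fin n → Pt) (x : Pt) (i j k : Fin n) (z : ℤ) :
    Set (Fin n → ℚ) :=
  {c | (∀ t, t ≠ i → t ≠ j → t ≠ k → c t = code p x t) ∧
       ({c i, c j, c k} : Set ℚ) = {(z : ℚ), (z : ℚ) + 1, (z : ℚ) + 2}}

/-!
Near `x` every strict comparison between distances to the generators persists, so at a cell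
point `y` close to `x` only the order of the three tied distances to `p i`, `p j`, `p k` can
change. Hence `code y` agrees with `code x` off `{i, j, k}`, and on `{i, j, k}` it equals `z` plus
the number of the other two of these generators that are farther from `y`: a permutation of
`z, z + 1, z + 2`. Conversely, `p i`, `p j`, `p k` lie on a circle about `x`, so they are affinely
independent, and moving `x` slightly in a direction `v` with prescribed inner products
`⟪p a, v⟫` realizes each of the six orders. The count and the average are then bookkeeping over
the six triples.
-/

open RealInnerProductSpace Matrix Topology Finset

def DistLtPersists {X ι : Type*} [MetricSpace X] (p : ι → X) (x y : X) : Prop :=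
  ∀ a b, dist x (p a) < dist x (p b) → dist y (p a) < dist y (p b)

theorem eventually_distLtPersists {X ι : Type*} [MetricSpace X] [Finite ι] (p : ι → X) (x : X) :
    ∀ᶠ y in 𝓝 x, DistLtPersists p x y := by
  refine Filter.eventually_all.2 fun a => Filter.eventually_all.2 fun b => ?_
  by_cases h : dist x (p a) < dist x (p b)
  · filter_upwards [(continuous_id.dist continuous_const).continuousAt.eventually_lt
      (continuous_id.dist continuous_const).continuousAt h] with y hy using fun _ => hy
  · exact Filter.Eventually.of_forall fun y h' => absurd h' h

section InnerProduct

variable {E : Type*} [NormedAddCommGroup E] [InnerProductSpace ℝ E]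

/-- Solve the Gram system: `v = ∑ l, (G⁻¹ f) l • b l`, where `G` is invertible by independence. -/
theorem LinearIndependent.exists_inner_eq {ι : Type*} [Fintype ι] {b : ι → E}
    (hb : LinearIndependent ℝ b) (f : ι → ℝ) : ∃ v : E, ∀ m, ⟪b m, v⟫ = f m := by
  classical
  have hG : IsUnit (gram ℝ b).det :=
    isUnit_iff_ne_zero.2 (det_gram_ne_zero_iff_linearIndependent.2 hb)
  refine ⟨∑ l, ((gram ℝ b)⁻¹ *ᵥ f) l • b l, fun m => ?_⟩
  have h : (gram ℝ b *ᵥ ((gram ℝ b)⁻¹ *ᵥ f)) m = f m := by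
    rw [mulVec_mulVec, mul_nonsing_inv _ hG, one_mulVec]
  rw [← h, inner_sum]
  simp [mulVec, dotProduct, inner_smul_right, mul_comm]

theorem AffineIndependent.exists_inner_eq_add_const {ι : Type*} [Fintype ι] {q : ι → E}
    (hq : AffineIndependent ℝ q) (w : ι → ℝ) : ∃ (v : E) (C : ℝ), ∀ m, ⟪q m, v⟫ = w m + C := by
  classical
  rcases isEmpty_or_nonempty ι with hι | ⟨⟨m₀⟩⟩
  · exact ⟨0, 0, fun m => isEmptyElim m⟩
  obtain ⟨v, hv⟩ := ((affineIndependent_iff_linearIndependent_vsub ℝ q m₀).1 hq).exists_inner_eq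
    fun m => w m - w m₀
  refine ⟨v, ⟪q m₀, v⟫ - w m₀, fun m => ?_⟩
  rcases eq_or_ne m m₀ with rfl | hm
  · ring
  · have := hv ⟨m, hm⟩
    rw [vsub_eq_sub, inner_sub_left] at this
    linarith

theorem dist_add_smul_sq (x v a : E) (δ : ℝ) :
    dist (x + δ • v) a ^ 2 = dist x a ^ 2 + 2 * δ * ⟪x - a, v⟫ + δ ^ 2 * ‖v‖ ^ 2 := by
  rw [dist_eq_norm, dist_eq_norm, add_sub_right_comm, norm_add_sq_real, real_inner_smul_right,
    norm_smul, mul_pow, Real.norm_eq_abs, sq_abs]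
  ring

/-- Take `y = x + δ • v` with `⟪q m, v⟫ = w m + C`: then `dist y (q m) ^ 2` is `-2 δ w m` plus a
term independent of `m`. -/
theorem AffineIndependent.exists_mem_ball_dist_lt_dist_iff {ι : Type*} [Fintype ι] {q : ι → E}
    (hq : AffineIndependent ℝ q) {x : E} {R : ℝ} (hx : ∀ m, dist x (q m) = R) (w : ι → ℝ)
    {ε : ℝ} (hε : 0 < ε) :
    ∃ y ∈ Metric.ball x ε, ∀ m m', dist y (q m) < dist y (q m') ↔ w m' < w m := by
  obtain ⟨v, C, hv⟩ := hq.exists_inner_eq_add_const w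
  set δ := ε / (‖v‖ + 1)
  have hδ : 0 < δ := by positivity
  refine ⟨x + δ • v, ?_, fun m m' => ?_⟩
  · rw [Metric.mem_ball, dist_eq_norm, add_sub_cancel_left, norm_smul, Real.norm_eq_abs,
      abs_of_pos hδ]
    calc δ * ‖v‖ < δ * (‖v‖ + 1) := by gcongr; linarith
      _ = ε := div_mul_cancel₀ ε (by positivity)
  · have hsq : ∀ m, dist (x + δ • v) (q m) ^ 2 =
        R ^ 2 + 2 * δ * (⟪x, v⟫ - C) + δ ^ 2 * ‖v‖ ^ 2 - 2 * δ * w m := by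
      intro m
      rw [dist_add_smul_sq, hx, inner_sub_left, hv]
      ring
    rw [← pow_lt_pow_iff_left₀ dist_nonneg dist_nonneg two_ne_zero, hsq, hsq]
    constructor <;> intro h <;> nlinarith

end InnerProduct

def consecutiveTriples (z : ℚ) : Finset (ℚ × ℚ × ℚ) :=
  {(z, z + 1, z + 2), (z, z + 2, z + 1), (z + 1, z, z + 2), (z + 1, z + 2, z),
    (z + 2, z, z + 1), (z + 2, z + 1, z)}

theorem card_consecutiveTriples (z : ℚ) : #(consecutiveTriples z) = 6 := by
  rw [consecutiveTriples]
  repeat rw [card_insert_of_notMem (by norm_num)]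
  rfl

theorem sum_consecutiveTriples {M : Type*} [AddCommMonoid M] (z : ℚ) (f : ℚ × ℚ × ℚ → M) :
    ∑ v ∈ consecutiveTriples z, f v =
      f (z, z + 1, z + 2) + (f (z, z + 2, z + 1) + (f (z + 1, z, z + 2) + (f (z + 1, z + 2, z) +
        (f (z + 2, z, z + 1) + f (z + 2, z + 1, z))))) := by
  rw [consecutiveTriples]
  repeat rw [sum_insert (by norm_num)]
  rw [sum_singleton]

theorem insert_eq_consecutive_iff {a b c z : ℚ} :
    ({a, b, c} : Set ℚ) = {z, z + 1, z + 2} ↔ (a, b, c) ∈ consecutiveTriples z := by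
  constructor
  · intro h
    have hmem := Set.ext_iff.1 h
    have ha := (hmem a).1 (by simp)
    have hb := (hmem b).1 (by simp)
    have hc := (hmem c).1 (by simp)
    have h0 := (hmem z).2 (by simp)
    have h1 := (hmem (z + 1)).2 (by simp)
    have h2 := (hmem (z + 2)).2 (by simp)
    simp only [Set.mem_insert_iff, Set.mem_singleton_iff] at ha hb hc h0 h1 h2
    simp only [consecutiveTriples, mem_insert, mem_singleton, Prod.mk.injEq]
    rcases ha with rfl | rfl | rfl <;> rcases hb with rfl | rfl | rfl <;>
      rcases hc with rfl | rfl | rfl <;> revert h0 h1 h2 <;> norm_num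
  · intro h
    simp only [consecutiveTriples, mem_insert, mem_singleton, Prod.mk.injEq] at h
    rcases h with ⟨rfl, rfl, rfl⟩ | ⟨rfl, rfl, rfl⟩ | ⟨rfl, rfl, rfl⟩ | ⟨rfl, rfl, rfl⟩ |
      ⟨rfl, rfl, rfl⟩ | ⟨rfl, rfl, rfl⟩ <;>
      ext q <;> simp only [Set.mem_insert_iff, Set.mem_singleton_iff] <;> tauto

theorem ne_of_mem_consecutiveTriples {a b c z : ℚ} (h : (a, b, c) ∈ consecutiveTriples z) :
    a ≠ b ∧ a ≠ c ∧ b ≠ c := by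
  simp only [consecutiveTriples, mem_insert, mem_singleton, Prod.mk.injEq] at h
  rcases h with ⟨rfl, rfl, rfl⟩ | ⟨rfl, rfl, rfl⟩ | ⟨rfl, rfl, rfl⟩ | ⟨rfl, rfl, rfl⟩ |
    ⟨rfl, rfl, rfl⟩ | ⟨rfl, rfl, rfl⟩ <;> norm_num

theorem mem_consecutiveTriples_of_ne {α : Type*} [LinearOrder α] {a b c : α}
    (hab : a ≠ b) (hac : a ≠ c) (hbc : b ≠ c) (z : ℚ) :
    (z + ((if a < b then 1 else 0) + (if a < c then 1 else 0)),
      z + ((if b < a then 1 else 0) + (if b < c then 1 else 0)),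
      z + ((if c < a then 1 else 0) + (if c < b then 1 else 0))) ∈ consecutiveTriples z := by
  rcases hab.lt_or_gt with h₁ | h₁ <;> rcases hac.lt_or_gt with h₂ | h₂ <;>
    rcases hbc.lt_or_gt with h₃ | h₃ <;> (try order) <;>
    norm_num [consecutiveTriples, h₁, h₂, h₃, h₁.not_gt, h₂.not_gt, h₃.not_gt]

theorem eq_of_mem_consecutiveTriples {a b c z : ℚ} (h : (a, b, c) ∈ consecutiveTriples z) :
    (a, b, c) = (z + ((if b < a then 1 else 0) + (if c < a then 1 else 0)),
      z + ((if a < b then 1 else 0) + (if c < b then 1 else 0)),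
      z + ((if a < c then 1 else 0) + (if b < c then 1 else 0))) := by
  simp only [consecutiveTriples, mem_insert, mem_singleton, Prod.mk.injEq] at h
  rcases h with ⟨rfl, rfl, rfl⟩ | ⟨rfl, rfl, rfl⟩ | ⟨rfl, rfl, rfl⟩ | ⟨rfl, rfl, rfl⟩ |
    ⟨rfl, rfl, rfl⟩ | ⟨rfl, rfl, rfl⟩ <;> norm_num

def updateTriple {α β : Type*} [DecidableEq α] (f : α → β) (i j k : α) (v : β × β × β) : α → β :=
  Function.update (Function.update (Function.update f k v.2.2) j v.2.1) i v.1

section UpdateTriple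

variable {α β : Type*} [DecidableEq α] {i j k : α}

theorem updateTriple_apply_left (f : α → β) (i j k : α) (v : β × β × β) :
    updateTriple f i j k v i = v.1 :=
  Function.update_self ..

theorem updateTriple_apply_middle (hij : i ≠ j) (f : α → β) (v : β × β × β) :
    updateTriple f i j k v j = v.2.1 := by
  simp [updateTriple, hij.symm]

theorem updateTriple_apply_right (hik : i ≠ k) (hjk : j ≠ k) (f : α → β) (v : β × β × β) :
    updateTriple f i j k v k = v.2.2 := by
  simp [updateTriple, hik.symm, hjk.symm]

theorem updateTriple_apply_of_ne {t : α} (hti : t ≠ i) (htj : t ≠ j) (htk : t ≠ k) (f : α → β)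
    (v : β × β × β) : updateTriple f i j k v t = f t := by
  simp [updateTriple, hti, htj, htk]

theorem updateTriple_injective (hij : i ≠ j) (hik : i ≠ k) (hjk : j ≠ k) (f : α → β) :
    Function.Injective (updateTriple f i j k) := by
  intro v w h
  have hi := congrFun h i
  have hj := congrFun h j
  have hk := congrFun h k
  rw [updateTriple_apply_left, updateTriple_apply_left] at hi
  rw [updateTriple_apply_middle hij, updateTriple_apply_middle hij] at hj
  rw [updateTriple_apply_right hik hjk, updateTriple_apply_right hik hjk] at hk
  exact Prod.ext hi (Prod.ext hj hk)

end UpdateTriple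

variable {n : ℕ} {p : Fin n → Pt}

open scoped Classical in
theorem code_eq_card (x : Pt) (t : Fin n) :
    code p x t = #{s | s ≠ t ∧ dist x (p t) < dist x (p s)} + 1 / 2 * #{s | Tie p x t s} := by
  have hTie : {s | s ≠ t ∧ dist x (p s) = dist x (p t)} = {s | Tie p x t s} := by
    ext s; simp only [Tie, Set.mem_ofPred_eq, ne_comm, eq_comm]
  rw [code, hTie, Set.ncard_eq_toFinset_card', Set.ncard_eq_toFinset_card', Set.toFinset_ofPred,
    Set.toFinset_ofPred]

open scoped Classical in
theorem code_eq_add_sum_tie {x y : Pt} (hxy : DistLtPersists p x y) (hy : CellPoint p y)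
    (t : Fin n) :
    code p y t = code p x t +
      ∑ s with Tie p x t s, ((if dist y (p t) < dist y (p s) then 1 else 0) - 1 / 2 : ℚ) := by
  have hy' : ∀ s, ¬ Tie p y t s := hy t
  simp only [code_eq_card, hy', filter_false, card_empty, card_filter, sum_filter, Nat.cast_sum,
    Nat.cast_ite, Nat.cast_one, Nat.cast_zero, mul_sum, ← sum_add_distrib]
  rw [mul_zero, add_zero]
  refine sum_congr rfl fun s _ => ?_
  rcases eq_or_ne s t with rfl | hst
  · simp [Tie]
  rcases lt_trichotomy (dist x (p t)) (dist x (p s)) with h | h | h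
  · simp [Tie, h, hxy _ _ h, hst, h.ne]
  · simp [Tie, h, hst, hst.symm]
  · simp [Tie, h.ne', (hxy _ _ h).not_gt, h.le]

theorem CellPoint.of_dist_lt_dist {x y : Pt} (hxy : DistLtPersists p x y)
    (hties : ∀ a b, Tie p x a b → dist y (p a) ≠ dist y (p b)) : CellPoint p y := by
  rintro a b ⟨hab, heq⟩
  rcases lt_trichotomy (dist x (p a)) (dist x (p b)) with h | h | h
  · exact (hxy _ _ h).ne heq
  · exact hties a b ⟨hab, h⟩ heq
  · exact (hxy _ _ h).ne' heq

def IsTieTriple (p : Fin n → Pt) (x : Pt) (i j k : Fin n) : Prop :=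
  ∀ a b, Tie p x a b ↔ (a ≠ b ∧ a ∈ ({i, j, k} : Set (Fin n)) ∧ b ∈ ({i, j, k} : Set (Fin n)))

namespace IsTieTriple

variable {x y : Pt} {i j k : Fin n}

theorem swap (h : IsTieTriple p x i j k) : IsTieTriple p x j i k := by
  rwa [IsTieTriple, Set.insert_comm]

theorem rotate (h : IsTieTriple p x i j k) : IsTieTriple p x k i j := by
  rwa [IsTieTriple, Set.insert_comm k, Set.pair_comm k]

theorem dist_eq (h : IsTieTriple p x i j k) {a b : Fin n} (ha : a ∈ ({i, j, k} : Set (Fin n)))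
    (hb : b ∈ ({i, j, k} : Set (Fin n))) : dist x (p a) = dist x (p b) := by
  rcases eq_or_ne a b with rfl | hab
  · rfl
  · exact ((h a b).2 ⟨hab, ha, hb⟩).2

open scoped Classical in
theorem filter_tie_eq (h : IsTieTriple p x i j k) (hij : i ≠ j) (hik : i ≠ k) :
    ({s | Tie p x i s} : Finset (Fin n)) = {j, k} := by
  ext s
  simp only [mem_filter, mem_univ, true_and, h i s, Set.mem_insert_iff, Set.mem_singleton_iff,
    mem_insert, mem_singleton]
  constructor
  · rintro ⟨hne, -, rfl | rfl | rfl⟩ <;> simp_all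
  · rintro (rfl | rfl) <;> simp [hij, hik]

open scoped Classical in
theorem filter_tie_eq_empty (h : IsTieTriple p x i j k) {t : Fin n}
    (ht : t ∉ ({i, j, k} : Set (Fin n))) : ({s | Tie p x t s} : Finset (Fin n)) = ∅ :=
  filter_eq_empty_iff.2 fun s _ hs => ht ((h t s).1 hs).2.1

theorem code_eq (h : IsTieTriple p x i j k) (hij : i ≠ j) (hik : i ≠ k) (hjk : j ≠ k)
    (hxy : DistLtPersists p x y) (hy : CellPoint p y) :
    code p y i = code p x i +
      ((if dist y (p i) < dist y (p j) then 1 else 0) +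
        (if dist y (p i) < dist y (p k) then 1 else 0)) - 1 := by
  rw [code_eq_add_sum_tie hxy hy, h.filter_tie_eq hij hik, sum_pair hjk]
  ring

theorem code_eq_of_notMem (h : IsTieTriple p x i j k) (hxy : DistLtPersists p x y)
    (hy : CellPoint p y) {t : Fin n} (ht : t ∉ ({i, j, k} : Set (Fin n))) :
    code p y t = code p x t := by
  rw [code_eq_add_sum_tie hxy hy, h.filter_tie_eq_empty ht, sum_empty, add_zero]

theorem codeTriple_eq (h : IsTieTriple p x i j k) (hij : i ≠ j) (hik : i ≠ k) (hjk : j ≠ k)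
    {z : ℚ} (hzi : code p x i = z + 1) (hzj : code p x j = z + 1) (hzk : code p x k = z + 1)
    (hxy : DistLtPersists p x y) (hy : CellPoint p y) :
    (code p y i, code p y j, code p y k) =
      (z + ((if dist y (p i) < dist y (p j) then 1 else 0) +
          (if dist y (p i) < dist y (p k) then 1 else 0)),
        z + ((if dist y (p j) < dist y (p i) then 1 else 0) +
          (if dist y (p j) < dist y (p k) then 1 else 0)),
        z + ((if dist y (p k) < dist y (p i) then 1 else 0) +
          (if dist y (p k) < dist y (p j) then 1 else 0))) := by
  rw [h.code_eq hij hik hjk hxy hy, h.swap.code_eq hij.symm hjk hik hxy hy,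
    h.rotate.code_eq hik.symm hjk.symm hij hxy hy, hzi, hzj, hzk]
  ring_nf

theorem cellPoint_of_dist_ne (h : IsTieTriple p x i j k) (hxy : DistLtPersists p x y)
    (hij : dist y (p i) ≠ dist y (p j)) (hik : dist y (p i) ≠ dist y (p k))
    (hjk : dist y (p j) ≠ dist y (p k)) : CellPoint p y := by
  refine CellPoint.of_dist_lt_dist hxy fun a b hab => ?_
  obtain ⟨hne, ha, hb⟩ := (h a b).1 hab
  simp only [Set.mem_insert_iff, Set.mem_singleton_iff] at ha hb
  rcases ha with rfl | rfl | rfl <;> rcases hb with rfl | rfl | rfl <;>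
    first | exact absurd rfl hne | assumption | exact Ne.symm ‹_›

theorem code_mem_cellCodes3I (h : IsTieTriple p x i j k) (hij : i ≠ j) (hik : i ≠ k)
    (hjk : j ≠ k) {z : ℤ} (hzi : code p x i = z + 1) (hzj : code p x j = z + 1)
    (hzk : code p x k = z + 1)
    (hxy : DistLtPersists p x y) (hy : CellPoint p y) : code p y ∈ cellCodes3I p x i j k z := by
  refine ⟨fun t hti htj htk => h.code_eq_of_notMem hxy hy (by simp [hti, htj, htk]), ?_⟩
  rw [insert_eq_consecutive_iff, h.codeTriple_eq hij hik hjk hzi hzj hzk hxy hy]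
  exact mem_consecutiveTriples_of_ne (fun e => hy i j ⟨hij, e⟩) (fun e => hy i k ⟨hik, e⟩)
    (fun e => hy j k ⟨hjk, e⟩) z

theorem exists_cellPoint_code_eq (hp : Function.Injective p) (h : IsTieTriple p x i j k)
    (hij : i ≠ j) (hik : i ≠ k) (hjk : j ≠ k) {z : ℤ} (hzi : code p x i = z + 1)
    (hzj : code p x j = z + 1) (hzk : code p x k = z + 1) {ε : ℝ} (hε : 0 < ε)
    (hball : ∀ y ∈ ball x ε, DistLtPersists p x y)
    {c : Fin n → ℚ} (hc : c ∈ cellCodes3I p x i j k z) :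
    ∃ y ∈ ball x ε, CellPoint p y ∧ code p y = c := by
  obtain ⟨hout, hset⟩ := hc
  have hv := insert_eq_consecutive_iff.1 hset
  obtain ⟨hcij, hcik, hcjk⟩ := ne_of_mem_consecutiveTriples hv
  have hxj : dist x (p j) = dist x (p i) := h.dist_eq (by simp) (by simp)
  have hxk : dist x (p k) = dist x (p i) := h.dist_eq (by simp) (by simp)
  have hq : AffineIndependent ℝ ![p i, p j, p k] := by
    refine EuclideanGeometry.Cospherical.affineIndependent_of_ne
      ⟨x, dist x (p i), ?_⟩ (hp.ne hij) (hp.ne hik) (hp.ne hjk)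
    simp [dist_comm, hxj, hxk]
  obtain ⟨y, hy, hlt⟩ := hq.exists_mem_ball_dist_lt_dist_iff (x := x) (R := dist x (p i))
    (by simp [Fin.forall_fin_succ, hxj, hxk]) ![(c i : ℝ), c j, c k] hε
  simp only [Fin.forall_fin_succ, IsEmpty.forall_iff, and_true, Rat.cast_lt,
    Matrix.cons_val_zero, Matrix.cons_val_succ] at hlt
  have hcell : CellPoint p y := by
    refine h.cellPoint_of_dist_ne (hball y hy) ?_ ?_ ?_ <;> simp only [ne_iff_lt_or_gt, hlt]
    exacts [hcij.symm.lt_or_gt, hcik.symm.lt_or_gt, hcjk.symm.lt_or_gt]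
  refine ⟨y, hy, hcell, funext fun t => ?_⟩
  by_cases ht : t ∈ ({i, j, k} : Set (Fin n))
  · have htriple : (code p y i, code p y j, code p y k) = (c i, c j, c k) := by
      rw [h.codeTriple_eq hij hik hjk hzi hzj hzk (hball y hy) hcell,
        eq_of_mem_consecutiveTriples hv]
      simp only [hlt]
    simp only [Prod.mk.injEq] at htriple
    rcases ht with rfl | rfl | rfl
    exacts [htriple.1, htriple.2.1, htriple.2.2]
  · simp only [Set.mem_insert_iff, Set.mem_singleton_iff, not_or] at ht
    rw [h.code_eq_of_notMem (hball y hy) hcell (by simpa using ht), hout t ht.1 ht.2.1 ht.2.2]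

end IsTieTriple

section CellCodes

variable {x : Pt} {i j k : Fin n}

theorem cellCodes3I_eq_image (hij : i ≠ j) (hik : i ≠ k) (hjk : j ≠ k) (z : ℤ) :
    cellCodes3I p x i j k z = (consecutiveTriples z).image (updateTriple (code p x) i j k) := by
  ext c
  simp only [cellCodes3I, coe_image, Set.mem_image, mem_coe, Set.mem_ofPred_eq]
  constructor
  · rintro ⟨hout, hset⟩
    refine ⟨(c i, c j, c k), insert_eq_consecutive_iff.1 hset, funext fun t => ?_⟩
    by_cases hti : t = i
    · rw [hti, updateTriple_apply_left]
    by_cases htj : t = j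
    · rw [htj, updateTriple_apply_middle hij]
    by_cases htk : t = k
    · rw [htk, updateTriple_apply_right hik hjk]
    rw [updateTriple_apply_of_ne hti htj htk, hout t hti htj htk]
  · rintro ⟨v, hv, rfl⟩
    refine ⟨fun t hti htj htk => updateTriple_apply_of_ne hti htj htk _ _, ?_⟩
    rw [updateTriple_apply_left, updateTriple_apply_middle hij, updateTriple_apply_right hik hjk]
    exact insert_eq_consecutive_iff.2 hv

theorem ncard_cellCodes3I (hij : i ≠ j) (hik : i ≠ k) (hjk : j ≠ k) (z : ℤ) :
    (cellCodes3I p x i j k z).ncard = 6 := by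
  rw [cellCodes3I_eq_image hij hik hjk, Set.ncard_coe_finset,
    card_image_of_injective _ (updateTriple_injective hij hik hjk _), card_consecutiveTriples]

theorem finsum_cellCodes3I (hij : i ≠ j) (hik : i ≠ k) (hjk : j ≠ k) {z : ℤ}
    (hzi : code p x i = z + 1) (hzj : code p x j = z + 1) (hzk : code p x k = z + 1)
    (t : Fin n) : ∑ᶠ c ∈ cellCodes3I p x i j k z, c t = 6 * code p x t := by
  rw [cellCodes3I_eq_image hij hik hjk, finsum_mem_coe_finset,
    sum_image fun v _ w _ h => updateTriple_injective hij hik hjk _ h, sum_consecutiveTriples]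
  by_cases hti : t = i
  · simp only [hti, updateTriple_apply_left, hzi]; ring
  by_cases htj : t = j
  · simp only [htj, updateTriple_apply_middle hij, hzj]; ring
  by_cases htk : t = k
  · simp only [htk, updateTriple_apply_right hik hjk, hzk]; ring
  simp only [updateTriple_apply_of_ne hti htj htk]; ring

end CellCodes

theorem vertex3I_unit_structure_general {n : ℕ} (p : Fin n → Pt)
    (hp : Function.Injective p) (x : Pt) (i j k : Fin n)
    (hij : i ≠ j) (hik : i ≠ k) (hjk : j ≠ k)
    (hexact : ∀ a b, Tie p x a b ↔
      (a ≠ b ∧ a ∈ ({i, j, k} : Set (Fin n)) ∧ b ∈ ({i, j, k} : Set (Fin n))))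
    (z : ℤ)
    (hzi : code p x i = (z : ℚ) + 1) (hzj : code p x j = (z : ℚ) + 1)
    (hzk : code p x k = (z : ℚ) + 1) :
    (∃ ε₀ > (0 : ℝ), ∀ ε : ℝ, 0 < ε → ε ≤ ε₀ →
      {c : Fin n → ℚ | ∃ y ∈ Metric.ball x ε, CellPoint p y ∧ code p y = c} =
        cellCodes3I p x i j k z) ∧
    (cellCodes3I p x i j k z).ncard = 6 ∧
    (∀ t, (6 : ℚ) * code p x t = ∑ᶠ c ∈ cellCodes3I p x i j k z, c t) := by
  have h : IsTieTriple p x i j k := hexact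
  obtain ⟨ε₀, hε₀, hball₀⟩ :=
    Metric.eventually_nhds_iff_ball.1 (eventually_distLtPersists p x)
  refine ⟨⟨ε₀, hε₀, fun ε hε hεε₀ => ?_⟩, ncard_cellCodes3I hij hik hjk z,
    fun t => (finsum_cellCodes3I hij hik hjk hzi hzj hzk t).symm⟩
  have hball : ∀ y ∈ ball x ε, DistLtPersists p x y :=
    fun y hy => hball₀ y (ball_subset_ball hεε₀ hy)
  ext c
  constructor
  · rintro ⟨y, hy, hcell, rfl⟩
    exact h.code_mem_cellCodes3I hij hik hjk hzi hzj hzk (hball y hy) hcell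
  · exact h.exists_cellPoint_code_eq hp hij hik hjk hzi hzj hzk hε hball

/-- structure of a 3-I unit: around a 3-I vertex point `x` whose ties are
exactly the pairs of `{i,j,k}`, with code value `z + 1` at `i,j,k`, the chromatic codes of
cell points in all small enough balls around `x` are exactly the six functions of
`cellCodes3I`, and `code x` is the average of these six cell codes. -/
theorem vertex3I_unit_structure {n : ℕ} (hn : 2 ≤ n) (p : Fin n → Pt)
    (hp : Function.Injective p) (x : Pt) (i j k : Fin n)
    (hij : i ≠ j) (hik : i ≠ k) (hjk : j ≠ k)
    (hexact : ∀ a b, Tie p x a b ↔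
      (a ≠ b ∧ a ∈ ({i, j, k} : Set (Fin n)) ∧ b ∈ ({i, j, k} : Set (Fin n))))
    (z : ℤ)
    (hzi : code p x i = (z : ℚ) + 1) (hzj : code p x j = (z : ℚ) + 1)
    (hzk : code p x k = (z : ℚ) + 1) :
    (∃ ε₀ > (0 : ℝ), ∀ ε : ℝ, 0 < ε → ε ≤ ε₀ →
      {c : Fin n → ℚ | ∃ y ∈ Metric.ball x ε, CellPoint p y ∧ code p y = c} =
        cellCodes3I p x i j k z) ∧
    (cellCodes3I p x i j k z).ncard = 6 ∧
    (∀ t, (6 : ℚ) * code p x t = ∑ᶠ c ∈ cellCodes3I p x i j k z, c t) :=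
  vertex3I_unit_structure_general p hp x i j k hij hik hjk hexact z hzi hzj hzk
end
end
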